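/- arXiv:1603.05527 — 6 statements merged into one kernel-verified Lean document; each statement's English description precedes it below -/
import Mathlib

section
/- If 0 → T₁ → T₂ → T₃ → 0 is an exact sequence of rational tori (exact as a sequence of abelian groups, with the maps being homomorphisms of rational tori), then the dual sequence 0 → T̂₃ → T̂₂ → T̂₁ → 0 is also exact. -/
/-!
Exactness of `0 → T₁ → T₂ → T₃ → 0` forces `0 → V₁ → V₂ → V₃ → 0` to be exact and `g` to map
`Λ₂` onto `Λ₃`: each defect is a `ℚ`-subspace lying in (the image of) a finitely generated group,
and such a subspace is zero. Dualizing the vector spaces then gives injectivity of `T̂₃ → T̂₂` and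
surjectivity of `T̂₂ → T̂₁`. For exactness at `T̂₂`, the free group `Λ₃` makes `Λ₂ → Λ₃` split, and
the splitting extends to a section `σ` of `g` with `σ(Λ₃) ⊆ Λ₂`. If `α ∘ f` is integral on `Λ₁`,
then `α ∘ σ ∘ g - α` is integral on `Λ₂`, because `σ (g y) - y` lies in `Λ₂ ∩ ker g = f(Λ₁)`.
-/

open Function

/-- The dual lattice `Λ̂ = {α ∈ V̂ : α(Λ) ⊆ ℤ}` of a lattice `Λ` in a ℚ-vector space. -/
def latticeDual' {V : Type} [AddCommGroup V] [Module ℚ V] (Λ : Submodule ℤ V) :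
    Submodule ℤ (Module.Dual ℚ V) where
  carrier := {α | ∀ x ∈ Λ, ∃ n : ℤ, α x = (n : ℚ)}
  add_mem' := by
    intro a b ha hb x hx
    obtain ⟨m, hm⟩ := ha x hx
    obtain ⟨n, hn⟩ := hb x hx
    exact ⟨m + n, by simp [hm, hn]⟩
  zero_mem' := by
    intro x hx
    exact ⟨0, by simp⟩
  smul_mem' := by
    intro c a ha x hx
    obtain ⟨n, hn⟩ := ha x hx
    refine ⟨c * n, ?_⟩
    simp only [LinearMap.smul_apply, hn, zsmul_eq_mul]
    push_cast
    ring

/-- The homomorphism of rational tori `V₁/Λ₁ → V₂/Λ₂` induced by a ℚ-linear map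
carrying `Λ₁` into `Λ₂`. -/
def ratTorusMap {V₁ V₂ : Type} [AddCommGroup V₁] [Module ℚ V₁] [AddCommGroup V₂] [Module ℚ V₂]
    (Λ₁ : Submodule ℤ V₁) (Λ₂ : Submodule ℤ V₂) (f : V₁ →ₗ[ℚ] V₂)
    (hf : ∀ x ∈ Λ₁, f x ∈ Λ₂) :
    (V₁ ⧸ Λ₁) →ₗ[ℤ] (V₂ ⧸ Λ₂) :=
  Submodule.mapQ Λ₁ Λ₂ (f.restrictScalars ℤ) fun x hx => hf x hx

open scoped nonZeroDivisors

namespace Submodule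

variable {V : Type*} [AddCommGroup V] [Module ℚ V]

theorem eq_bot_of_restrictScalars_le_of_fg {W : Submodule ℚ V} {Λ : Submodule ℤ V} (hΛ : Λ.FG)
    (hW : W.restrictScalars ℤ ≤ Λ) : W = ⊥ := by
  -- Nakayama for the ideal `(2)`: a divisible finitely generated group is killed by an odd integer
  obtain ⟨r, hr, hrW⟩ := exists_sub_one_mem_and_smul_eq_zero_of_fg_of_le_smul (Ideal.span {2})
    (W.restrictScalars ℤ) (hΛ.of_le hW) fun w hw => by
      have h2 : (2 : ℤ) • ((2 : ℚ)⁻¹ • w) = w := by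
        rw [← Int.cast_smul_eq_zsmul ℚ, smul_smul]; norm_num
      rw [← h2]
      exact smul_mem_smul (Ideal.mem_span_singleton_self _) (W.smul_mem _ hw)
  have hr0 : (r : ℚ) ≠ 0 := by
    obtain ⟨k, hk⟩ := Ideal.mem_span_singleton'.mp hr
    exact Int.cast_ne_zero.mpr (by omega)
  refine eq_bot_iff.mpr fun w hw => ?_
  have := hrW w hw
  rw [← Int.cast_smul_eq_zsmul ℚ] at this
  exact (smul_eq_zero.mp this).resolve_left hr0

theorem le_of_restrictScalars_le_sup_of_fg {W U : Submodule ℚ V} {Λ : Submodule ℤ V} (hΛ : Λ.FG)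
    (hW : W.restrictScalars ℤ ≤ U.restrictScalars ℤ ⊔ Λ) : W ≤ U := by
  have : W.map U.mkQ = ⊥ := by
    refine eq_bot_of_restrictScalars_le_of_fg (hΛ.map (U.mkQ.restrictScalars ℤ)) ?_
    rintro _ ⟨w, hw, rfl⟩
    obtain ⟨u, hu, l, hl, rfl⟩ := mem_sup.mp (hW hw)
    refine ⟨l, hl, ?_⟩
    simp [(Submodule.Quotient.mk_eq_zero U).mpr hu]
  rwa [← le_bot_iff, map_le_iff_le_comap, comap_bot, ker_mkQ] at this

theorem isBaseChange_subtype_of_span_eq_top {Λ : Submodule ℤ V} (hΛ : span ℚ (Λ : Set V) = ⊤) :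
    IsBaseChange ℚ Λ.subtype := by
  have hid := isLocalizedModule_id ℤ⁰ V ℚ
  refine (isLocalizedModule_iff_isBaseChange ℤ⁰ ℚ _).mp
    { map_units := hid.map_units
      surj := fun v => ?_
      exists_of_eq := fun h => ⟨1, by simpa using Subtype.ext h⟩ }
  have hv : v ∈ Λ.localized' ℚ ℤ⁰ LinearMap.id := by
    simp [localized'_eq_span, hΛ]
  obtain ⟨m, hm, s, rfl⟩ := hv
  exact ⟨(⟨m, hm⟩, s), IsLocalizedModule.mk'_cancel' _ _ _⟩

end Submodule

section RatTorusMap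

variable {V₁ V₂ V₃ : Type} [AddCommGroup V₁] [Module ℚ V₁] [AddCommGroup V₂] [Module ℚ V₂]
  [AddCommGroup V₃] [Module ℚ V₃] {Λ₁ : Submodule ℤ V₁} {Λ₂ : Submodule ℤ V₂}
  {Λ₃ : Submodule ℤ V₃} {f : V₁ →ₗ[ℚ] V₂} {g : V₂ →ₗ[ℚ] V₃}

@[simp]
theorem ratTorusMap_mk (hf : ∀ x ∈ Λ₁, f x ∈ Λ₂) (x : V₁) :
    ratTorusMap Λ₁ Λ₂ f hf (Submodule.Quotient.mk x) = Submodule.Quotient.mk (f x) :=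
  rfl

theorem injective_ratTorusMap_iff (hf : ∀ x ∈ Λ₁, f x ∈ Λ₂) :
    Injective (ratTorusMap Λ₁ Λ₂ f hf) ↔ ∀ x, f x ∈ Λ₂ → x ∈ Λ₁ := by
  rw [← LinearMap.ker_eq_bot, LinearMap.ker_eq_bot', (Submodule.Quotient.mk_surjective Λ₁).forall]
  simp only [ratTorusMap_mk, Submodule.Quotient.mk_eq_zero]

theorem surjective_ratTorusMap_iff (hf : ∀ x ∈ Λ₁, f x ∈ Λ₂) :
    Surjective (ratTorusMap Λ₁ Λ₂ f hf) ↔ ∀ y, ∃ x, f x - y ∈ Λ₂ := by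
  simp only [Surjective, (Submodule.Quotient.mk_surjective Λ₂).forall,
    (Submodule.Quotient.mk_surjective Λ₁).exists, ratTorusMap_mk, Submodule.Quotient.eq]

theorem exact_ratTorusMap_iff (hf : ∀ x ∈ Λ₁, f x ∈ Λ₂) (hg : ∀ y ∈ Λ₂, g y ∈ Λ₃) :
    Exact (ratTorusMap Λ₁ Λ₂ f hf) (ratTorusMap Λ₂ Λ₃ g hg) ↔
      ∀ y, g y ∈ Λ₃ ↔ ∃ x, f x - y ∈ Λ₂ := by
  simp only [Exact, Set.mem_range, (Submodule.Quotient.mk_surjective Λ₂).forall,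
    (Submodule.Quotient.mk_surjective Λ₁).exists, ratTorusMap_mk, Submodule.Quotient.eq,
    Submodule.Quotient.mk_eq_zero]

theorem surjective_ratTorusMap_of_surjective (hf : ∀ x ∈ Λ₁, f x ∈ Λ₂) (h : Surjective f) :
    Surjective (ratTorusMap Λ₁ Λ₂ f hf) :=
  (surjective_ratTorusMap_iff hf).mpr fun y => (h y).imp fun x hx => by simp [hx]

theorem exact_ratTorusMap_of_comp_eq_zero (hf : ∀ x ∈ Λ₁, f x ∈ Λ₂) (hg : ∀ y ∈ Λ₂, g y ∈ Λ₃)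
    (hgf : g ∘ₗ f = 0) (h : ∀ y, g y ∈ Λ₃ → ∃ x, f x - y ∈ Λ₂) :
    Exact (ratTorusMap Λ₁ Λ₂ f hf) (ratTorusMap Λ₂ Λ₃ g hg) := by
  refine (exact_ratTorusMap_iff hf hg).mpr fun y => ⟨h y, fun ⟨x, hx⟩ => ?_⟩
  have hgfx : g (f x) = 0 := LinearMap.congr_fun hgf x
  simpa [hgfx] using Λ₃.neg_mem (hg _ hx)

theorem injective_of_injective_ratTorusMap (hΛ₁ : Λ₁.FG) (hf : ∀ x ∈ Λ₁, f x ∈ Λ₂)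
    (h : Injective (ratTorusMap Λ₁ Λ₂ f hf)) : Injective f :=
  LinearMap.ker_eq_bot.mp <| Submodule.eq_bot_of_restrictScalars_le_of_fg hΛ₁ fun x hx =>
    (injective_ratTorusMap_iff hf).mp h x (by simp [LinearMap.mem_ker.mp hx])

theorem surjective_of_surjective_ratTorusMap (hΛ₂ : Λ₂.FG) (hf : ∀ x ∈ Λ₁, f x ∈ Λ₂)
    (h : Surjective (ratTorusMap Λ₁ Λ₂ f hf)) : Surjective f :=
  LinearMap.range_eq_top.mp <| top_le_iff.mp <|
    Submodule.le_of_restrictScalars_le_sup_of_fg hΛ₂ fun y _ => by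
      obtain ⟨x, hx⟩ := (surjective_ratTorusMap_iff hf).mp h y
      exact Submodule.mem_sup.mpr
        ⟨f x, ⟨x, rfl⟩, y - f x, sub_mem_comm_iff.mp hx, add_sub_cancel _ _⟩

theorem comp_eq_zero_of_exact_ratTorusMap (hΛ₃ : Λ₃.FG) (hf : ∀ x ∈ Λ₁, f x ∈ Λ₂)
    (hg : ∀ y ∈ Λ₂, g y ∈ Λ₃) (h : Exact (ratTorusMap Λ₁ Λ₂ f hf) (ratTorusMap Λ₂ Λ₃ g hg)) :
    g ∘ₗ f = 0 := by
  rw [← LinearMap.range_eq_bot]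
  refine Submodule.eq_bot_of_restrictScalars_le_of_fg hΛ₃ ?_
  rintro _ ⟨x, rfl⟩
  exact ((exact_ratTorusMap_iff hf hg).mp h (f x)).mpr ⟨x, by simp⟩

theorem ker_le_range_of_exact_ratTorusMap (hΛ₂ : Λ₂.FG) (hf : ∀ x ∈ Λ₁, f x ∈ Λ₂)
    (hg : ∀ y ∈ Λ₂, g y ∈ Λ₃) (h : Exact (ratTorusMap Λ₁ Λ₂ f hf) (ratTorusMap Λ₂ Λ₃ g hg)) :
    LinearMap.ker g ≤ LinearMap.range f :=
  Submodule.le_of_restrictScalars_le_sup_of_fg hΛ₂ fun y hy => by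
    obtain ⟨x, hx⟩ := ((exact_ratTorusMap_iff hf hg).mp h y).mp
      (by simp [LinearMap.mem_ker.mp hy])
    exact Submodule.mem_sup.mpr ⟨f x, ⟨x, rfl⟩, y - f x, sub_mem_comm_iff.mp hx, add_sub_cancel _ _⟩

theorem le_map_of_exact_ratTorusMap (hf : ∀ x ∈ Λ₁, f x ∈ Λ₂) (hg : ∀ y ∈ Λ₂, g y ∈ Λ₃)
    (hg_surj : Surjective g) (hgf : g ∘ₗ f = 0)
    (h : Exact (ratTorusMap Λ₁ Λ₂ f hf) (ratTorusMap Λ₂ Λ₃ g hg)) :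
    Λ₃ ≤ Λ₂.map (g.restrictScalars ℤ) := by
  intro z hz
  obtain ⟨y, rfl⟩ := hg_surj z
  obtain ⟨x, hx⟩ := ((exact_ratTorusMap_iff hf hg).mp h y).mp hz
  have hgfx : g (f x) = 0 := LinearMap.congr_fun hgf x
  exact ⟨y - f x, sub_mem_comm_iff.mp hx, by simp [hgfx]⟩

theorem mem_latticeDual_of_dualMap_mem (hΛ : Λ₃ ≤ Λ₂.map (g.restrictScalars ℤ))
    {α : Module.Dual ℚ V₃} (hα : g.dualMap α ∈ latticeDual' Λ₂) : α ∈ latticeDual' Λ₃ := by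
  intro z hz
  obtain ⟨y, hy, rfl⟩ := hΛ hz
  exact hα y hy

theorem exists_rightInverse_mapsTo_of_le_map (hΛ₃ : Λ₃.FG)
    (hspan : Submodule.span ℚ (Λ₃ : Set V₃) = ⊤) (hg : ∀ y ∈ Λ₂, g y ∈ Λ₃)
    (hΛ : Λ₃ ≤ Λ₂.map (g.restrictScalars ℤ)) :
    ∃ σ : V₃ →ₗ[ℚ] V₂, g ∘ₗ σ = LinearMap.id ∧ ∀ z ∈ Λ₃, σ z ∈ Λ₂ := by
  -- `Λ₃` is finitely generated and torsion-free, hence free and so projective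
  have : Module.Finite ℤ Λ₃ := Module.Finite.iff_fg.mpr hΛ₃
  have : IsAddTorsionFree V₃ := .of_module_rat V₃
  obtain ⟨s, hs⟩ := Module.projective_lifting_property ((g.restrictScalars ℤ).restrict hg)
    LinearMap.id fun z => by
      obtain ⟨y, hy, hyz⟩ := hΛ z.2
      exact ⟨⟨y, hy⟩, Subtype.ext hyz⟩
  have hbc := Submodule.isBaseChange_subtype_of_span_eq_top hspan
  have hlift (z : Λ₃) : hbc.lift (Λ₂.subtype ∘ₗ s) z = s z := hbc.lift_eq _ z
  refine ⟨hbc.lift (Λ₂.subtype ∘ₗ s), hbc.algHom_ext _ _ fun z => ?_, fun z hz => ?_⟩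
  · change g (hbc.lift _ z) = z
    rw [hlift]
    exact congrArg Subtype.val (LinearMap.congr_fun hs z)
  · exact hlift ⟨z, hz⟩ ▸ (s ⟨z, hz⟩).2

theorem dualMap_comp_sub_mem_latticeDual {σ : V₃ →ₗ[ℚ] V₂} (hσ : g ∘ₗ σ = LinearMap.id)
    (hσΛ : ∀ z ∈ Λ₃, σ z ∈ Λ₂) (hg : ∀ y ∈ Λ₂, g y ∈ Λ₃)
    (hker : LinearMap.ker g ≤ LinearMap.range f) (hf : ∀ x, f x ∈ Λ₂ → x ∈ Λ₁)
    {α : Module.Dual ℚ V₂} (hα : f.dualMap α ∈ latticeDual' Λ₁) :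
    g.dualMap (α ∘ₗ σ) - α ∈ latticeDual' Λ₂ := by
  intro y hy
  obtain ⟨x, hx⟩ := hker (show σ (g y) - y ∈ LinearMap.ker g by
    simp [show g (σ (g y)) = g y from LinearMap.congr_fun hσ (g y)])
  obtain ⟨n, hn⟩ := hα x (hf x (hx ▸ sub_mem (hσΛ _ (hg y hy)) hy))
  exact ⟨n, by simpa [hx] using hn⟩

end RatTorusMap

theorem stmt_1_general
    (V₁ V₂ V₃ : Type)
    [AddCommGroup V₁] [Module ℚ V₁]
    [AddCommGroup V₂] [Module ℚ V₂]
    [AddCommGroup V₃] [Module ℚ V₃]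
    (Λ₁ : Submodule ℤ V₁) (Λ₂ : Submodule ℤ V₂) (Λ₃ : Submodule ℤ V₃)
    (hL₁ : Λ₁.FG ∧ Submodule.span ℚ (Λ₁ : Set V₁) = ⊤)
    (hL₂ : Λ₂.FG ∧ Submodule.span ℚ (Λ₂ : Set V₂) = ⊤)
    (hL₃ : Λ₃.FG ∧ Submodule.span ℚ (Λ₃ : Set V₃) = ⊤)
    (f : V₁ →ₗ[ℚ] V₂) (g : V₂ →ₗ[ℚ] V₃)
    (hf : ∀ x ∈ Λ₁, f x ∈ Λ₂) (hg : ∀ x ∈ Λ₂, g x ∈ Λ₃)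
    (hinj : Injective ⇑(ratTorusMap Λ₁ Λ₂ f hf))
    (hexact : Exact ⇑(ratTorusMap Λ₁ Λ₂ f hf) ⇑(ratTorusMap Λ₂ Λ₃ g hg))
    (hsurj : Surjective ⇑(ratTorusMap Λ₂ Λ₃ g hg))
    (hgd : ∀ α ∈ latticeDual' Λ₃, g.dualMap α ∈ latticeDual' Λ₂)
    (hfd : ∀ α ∈ latticeDual' Λ₂, f.dualMap α ∈ latticeDual' Λ₁) :
    Injective ⇑(ratTorusMap (latticeDual' Λ₃) (latticeDual' Λ₂) g.dualMap hgd) ∧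
    Exact ⇑(ratTorusMap (latticeDual' Λ₃) (latticeDual' Λ₂) g.dualMap hgd)
      ⇑(ratTorusMap (latticeDual' Λ₂) (latticeDual' Λ₁) f.dualMap hfd) ∧
    Surjective ⇑(ratTorusMap (latticeDual' Λ₂) (latticeDual' Λ₁) f.dualMap hfd) := by
  have hf_inj := injective_of_injective_ratTorusMap hL₁.1 hf hinj
  have hgf := comp_eq_zero_of_exact_ratTorusMap hL₃.1 hf hg hexact
  have hg_ker := ker_le_range_of_exact_ratTorusMap hL₂.1 hf hg hexact
  have hg_surj := surjective_of_surjective_ratTorusMap hL₃.1 hg hsurj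
  have hΛ := le_map_of_exact_ratTorusMap hf hg hg_surj hgf hexact
  obtain ⟨σ, hσ, hσΛ⟩ := exists_rightInverse_mapsTo_of_le_map hL₃.1 hL₃.2 hg hΛ
  have hfg_dual : f.dualMap ∘ₗ g.dualMap = 0 := by
    rw [LinearMap.dualMap_comp_dualMap, hgf]
    exact LinearMap.ext fun α => α.comp_zero
  refine ⟨(injective_ratTorusMap_iff hgd).mpr fun α => mem_latticeDual_of_dualMap_mem hΛ,
    exact_ratTorusMap_of_comp_eq_zero hgd hfd hfg_dual fun α hα =>
      ⟨α ∘ₗ σ, dualMap_comp_sub_mem_latticeDual hσ hσΛ hg hg_ker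
        ((injective_ratTorusMap_iff hf).mp hinj) hα⟩,
    surjective_ratTorusMap_of_surjective hfd (LinearMap.dualMap_surjective_of_injective hf_inj)⟩

/-- If `0 → T₁ → T₂ → T₃ → 0` is an exact sequence of rational tori, then the
dual sequence `0 → T̂₃ → T̂₂ → T̂₁ → 0` is also exact. -/
theorem stmt_1
    (V₁ V₂ V₃ : Type)
    [AddCommGroup V₁] [Module ℚ V₁] [FiniteDimensional ℚ V₁]
    [AddCommGroup V₂] [Module ℚ V₂] [FiniteDimensional ℚ V₂]
    [AddCommGroup V₃] [Module ℚ V₃] [FiniteDimensional ℚ V₃]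
    (Λ₁ : Submodule ℤ V₁) (Λ₂ : Submodule ℤ V₂) (Λ₃ : Submodule ℤ V₃)
    (hL₁ : Λ₁.FG ∧ Submodule.span ℚ (Λ₁ : Set V₁) = ⊤)
    (hL₂ : Λ₂.FG ∧ Submodule.span ℚ (Λ₂ : Set V₂) = ⊤)
    (hL₃ : Λ₃.FG ∧ Submodule.span ℚ (Λ₃ : Set V₃) = ⊤)
    (f : V₁ →ₗ[ℚ] V₂) (g : V₂ →ₗ[ℚ] V₃)
    (hf : ∀ x ∈ Λ₁, f x ∈ Λ₂) (hg : ∀ x ∈ Λ₂, g x ∈ Λ₃)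
    (hinj : Injective ⇑(ratTorusMap Λ₁ Λ₂ f hf))
    (hexact : Exact ⇑(ratTorusMap Λ₁ Λ₂ f hf) ⇑(ratTorusMap Λ₂ Λ₃ g hg))
    (hsurj : Surjective ⇑(ratTorusMap Λ₂ Λ₃ g hg))
    (hgd : ∀ α ∈ latticeDual' Λ₃, g.dualMap α ∈ latticeDual' Λ₂)
    (hfd : ∀ α ∈ latticeDual' Λ₂, f.dualMap α ∈ latticeDual' Λ₁) :
    Injective ⇑(ratTorusMap (latticeDual' Λ₃) (latticeDual' Λ₂) g.dualMap hgd) ∧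
    Exact ⇑(ratTorusMap (latticeDual' Λ₃) (latticeDual' Λ₂) g.dualMap hgd)
      ⇑(ratTorusMap (latticeDual' Λ₂) (latticeDual' Λ₁) f.dualMap hfd) ∧
    Surjective ⇑(ratTorusMap (latticeDual' Λ₂) (latticeDual' Λ₁) f.dualMap hfd) :=
  stmt_1_general V₁ V₂ V₃ Λ₁ Λ₂ Λ₃ hL₁ hL₂ hL₃ f g hf hg hinj hexact hsurj hgd hfd
end

section
/- Let Λ̄ be a free ℤ-module of rank n, let Λ ≤ Λ̄ be a submodule of the same rank n, and let d₁ | d₂ | ⋯ | d_n be the elementary divisors of Λ in Λ̄. Suppose λ̄₁,…,λ̄_n ∈ Λ̄ are such that Λ̄/Λ is the internal direct sum of the cyclic subgroups generated by the classes [λ̄₁],…,[λ̄_n], with [λ̄_i] of order d_i. Then there exists a ℤ-basis (λ₁,…,λ_n) of Λ such that for every i ∈ {1,…,n} one can choose a representative λ̄′_i ∈ λ̄_i + Λ with d_i·λ̄′_i = a_i·λ_i for some natural number a_i satisfying a_i ≤ d_i and gcd(a_i,d_i) = 1. -/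
/-!
Induction on `n`, splitting off the last class. Put `e = d_n`; it kills `Λ̄/Λ`. A lift `Λ̄ → ℤ`
of the last coordinate `Λ̄ → Λ̄/Λ → ℤ/e`, divided by its content, is a surjective `ψ : Λ̄ → ℤ`
with `ψ(Λ) ⊆ eℤ` and `e ∣ ψ(λ̄ᵢ)` for `i < n`; surjectivity makes `ψ(λ̄ₙ)` prime to `e`.
Subtracting multiples of `e • u ∈ Λ`, where `ψ u = 1`, moves `λ̄ᵢ` into `ker ψ ≅ ℤⁿ⁻¹` for `i < n`
and puts `a := ψ(λ̄ₙ)` in `[0, e)`. The classes of `λ̄₁, …, λ̄ₙ₋₁` decompose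
`ker ψ / (Λ ∩ ker ψ)`, so induction gives a basis of `Λ ∩ ker ψ`, which any `w ∈ Λ` with
`ψ w = e` completes to a basis of `Λ`. Bézout for `a` and `e` lets one choose `w` and the
representative `y` of `λ̄ₙ` so that `e • y = a • w`.
-/

open Module

section

variable {R M : Type*} [CommRing R] [AddCommGroup M] [Module R M]

theorem Submodule.exists_smul_eq_smul_of_isCoprime {Λ : Submodule R M} {ψ : M →ₗ[R] R} {e : R}
    {w x : M} (hw : w ∈ Λ) (hψw : ψ w = e) (hx : e • x ∈ Λ) (hcop : IsCoprime (ψ x) e) :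
    ∃ w' ∈ Λ, ψ w' = e ∧ ∃ y, y - x ∈ Λ ∧ e • y = ψ x • w' := by
  obtain ⟨A, B, hAB⟩ := hcop
  set k := e • x - ψ x • w
  have hk : k ∈ Λ := Λ.sub_mem hx (Λ.smul_mem _ hw)
  have hψk : ψ k = 0 := by simp [k, hψw, mul_comm]
  refine ⟨w + A • k, Λ.add_mem hw (Λ.smul_mem _ hk), by simp [hψk, hψw], x - B • k,
    by simpa using Λ.neg_mem (Λ.smul_mem B hk), ?_⟩
  simp only [k]
  linear_combination (norm := module) -(hAB • (e • x - ψ x • w))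

section Domain

variable [IsDomain R]

theorem Submodule.exists_basis_snoc {n : ℕ} {ψ : M →ₗ[R] R} {N P : Submodule R M}
    (hNP : N ≤ P) (hN : ∀ x ∈ P, x ∈ N ↔ ψ x = 0) (b : Basis (Fin n) R N) {w : M} (hwP : w ∈ P)
    (hw : ψ w ≠ 0) (hdvd : ∀ x ∈ P, ψ w ∣ ψ x) :
    ∃ B : Basis (Fin (n + 1)) R P, (∀ j, (B j.castSucc : M) = b j) ∧ (B (Fin.last n) : M) = w := by
  refine ⟨Basis.mkFinSnocOfLE b hNP w hwP (fun c x hx hcx => ?_) (fun z hz => ?_),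
    fun j => by simp, by simp⟩
  · have := congrArg ψ hcx
    rw [map_add, map_smul, (hN x (hNP hx)).mp hx, smul_eq_mul, add_zero, map_zero] at this
    exact (mul_eq_zero.mp this).resolve_right hw
  · obtain ⟨t, ht⟩ := hdvd z hz
    refine ⟨-t, (hN _ (P.add_mem hz (P.smul_mem _ hwP))).mpr ?_⟩
    rw [map_add, map_smul, ht, smul_eq_mul]
    ring

variable [IsPrincipalIdealRing R]

theorem LinearMap.exists_surjective_mul_eq {φ : M →ₗ[R] R} (hφ : φ ≠ 0) :
    ∃ g : R, ∃ ψ : M →ₗ[R] R, Function.Surjective ψ ∧ ∀ x, φ x = g * ψ x := by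
  set g := Submodule.IsPrincipal.generator (LinearMap.range φ)
  have hrange : LinearMap.range φ = R ∙ g :=
    (Submodule.IsPrincipal.span_singleton_generator _).symm
  have hg : g ≠ 0 := by
    intro h0
    rw [h0, Submodule.span_singleton_eq_bot.mpr rfl, LinearMap.range_eq_bot] at hrange
    exact hφ hrange
  let e := LinearEquiv.ofEq _ _ hrange ≪≫ₗ (LinearEquiv.toSpanNonzeroSingleton R R g hg).symm
  refine ⟨g, e.toLinearMap ∘ₗ φ.rangeRestrict, e.surjective.comp φ.surjective_rangeRestrict,
    fun x => ?_⟩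
  have h := congrArg Subtype.val
    ((LinearEquiv.toSpanNonzeroSingleton R R g hg).apply_symm_apply ⟨φ x, hrange ▸ ⟨x, rfl⟩⟩)
  simp only [LinearEquiv.toSpanNonzeroSingleton_apply, smul_eq_mul] at h
  rw [mul_comm]
  exact h.symm

theorem LinearMap.nonempty_basis_ker_of_surjective {n : ℕ} (b : Basis (Fin (n + 1)) R M)
    {ψ : M →ₗ[R] R} (hψ : Function.Surjective ψ) :
    Nonempty (Basis (Fin n) R (LinearMap.ker ψ)) := by
  obtain ⟨m, bK⟩ := Submodule.basisOfPid b (LinearMap.ker ψ)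
  have : Module.Finite R M := .of_basis b
  have h := (LinearMap.ker ψ).finrank_quotient_add_finrank
  rw [(ψ.quotKerEquivOfSurjective hψ).finrank_eq, finrank_self, finrank_eq_card_basis bK,
    finrank_eq_card_basis b, Fintype.card_fin, Fintype.card_fin] at h
  exact ⟨bK.reindex (finCongr (by omega))⟩

end Domain

end

theorem Submodule.exists_sub_mem_apply_eq_emod {M : Type*} [AddCommGroup M] {Λ : Submodule ℤ M}
    {ψ : M →ₗ[ℤ] ℤ} {w : M} (hw : w ∈ Λ) (x : M) : ∃ x', x' - x ∈ Λ ∧ ψ x' = ψ x % ψ w :=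
  ⟨x - (ψ x / ψ w) • w, by simpa using Λ.neg_mem (Λ.smul_mem (ψ x / ψ w) hw),
    by simp [Int.emod_def, mul_comm]⟩

theorem Int.exists_natCast_eq_of_isCoprime {a : ℤ} {e : ℕ} (ha : 0 ≤ a) (hae : a < e)
    (hcop : IsCoprime a e) : ∃ k : ℕ, (k : ℤ) = a ∧ k ≤ e ∧ Nat.gcd k e = 1 := by
  lift a to ℕ using ha
  exact ⟨a, rfl, by omega, Nat.isCoprime_iff_coprime.mp hcop⟩

/-- `M ⧸ Λ` is the internal direct sum of the cyclic groups generated by the classes of the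
`v i`, the class of `v i` having order `d i`. -/
structure IsCyclicDecomposition {M ι : Type*} [AddCommGroup M] [Fintype ι]
    (Λ : Submodule ℤ M) (d : ι → ℕ) (v : ι → M) : Prop where
  exists_sub_sum_mem : ∀ x : M, ∃ c : ι → ℤ, x - ∑ i, c i • v i ∈ Λ
  sum_mem_iff : ∀ c : ι → ℤ, ∑ i, c i • v i ∈ Λ ↔ ∀ i, (d i : ℤ) ∣ c i

namespace IsCyclicDecomposition

variable {M : Type*} [AddCommGroup M] {Λ : Submodule ℤ M}

section

variable {ι : Type*} [Fintype ι] {d : ι → ℕ} {v : ι → M}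

theorem smul_mem_iff (h : IsCyclicDecomposition Λ d v) (i : ι) (c : ℤ) :
    c • v i ∈ Λ ↔ (d i : ℤ) ∣ c := by
  classical
  have := h.sum_mem_iff (Pi.single i c)
  simp only [Pi.single_apply, ite_smul, zero_smul, Finset.sum_ite_eq', Finset.mem_univ,
    if_true] at this
  rw [this]
  refine ⟨fun H => by simpa using H i, fun H j => ?_⟩
  split_ifs with hj
  · exact hj ▸ H
  · exact dvd_zero _

theorem smul_mem_of_forall_dvd (h : IsCyclicDecomposition Λ d v) {e : ℤ}
    (he : ∀ i, (d i : ℤ) ∣ e) (x : M) : e • x ∈ Λ := by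
  obtain ⟨c, hc⟩ := h.exists_sub_sum_mem x
  have hsum : ∑ i, (e * c i) • v i ∈ Λ := (h.sum_mem_iff _).mpr fun i => (he i).mul_right _
  have : e • x = e • (x - ∑ i, c i • v i) + ∑ i, (e * c i) • v i := by
    simp only [smul_sub, Finset.smul_sum, mul_smul, sub_add_cancel]
  rw [this]
  exact Λ.add_mem (Λ.smul_mem e hc) hsum

theorem dvd_sub_of_sub_mem (h : IsCyclicDecomposition Λ d v) {x : M} {c c' : ι → ℤ}
    (hc : x - ∑ i, c i • v i ∈ Λ) (hc' : x - ∑ i, c' i • v i ∈ Λ) (i : ι) :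
    (d i : ℤ) ∣ c i - c' i := by
  refine (h.sum_mem_iff (c - c')).mp ?_ i
  have : ∑ i, (c - c') i • v i = (x - ∑ i, c' i • v i) - (x - ∑ i, c i • v i) := by
    simp only [Pi.sub_apply, sub_smul, Finset.sum_sub_distrib, sub_sub_sub_cancel_left]
  rw [this]
  exact Λ.sub_mem hc' hc

theorem of_sub_mem (h : IsCyclicDecomposition Λ d v) {v' : ι → M} (hv' : ∀ i, v' i - v i ∈ Λ) :
    IsCyclicDecomposition Λ d v' := by
  have hdiff : ∀ c : ι → ℤ, ∑ i, c i • v' i - ∑ i, c i • v i ∈ Λ := fun c => by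
    rw [← Finset.sum_sub_distrib]
    exact Λ.sum_mem fun i _ => by rw [← smul_sub]; exact Λ.smul_mem _ (hv' i)
  refine ⟨fun x => ?_, fun c => ?_⟩
  · obtain ⟨c, hc⟩ := h.exists_sub_sum_mem x
    refine ⟨c, ?_⟩
    rw [show x - ∑ i, c i • v' i = (x - ∑ i, c i • v i) - (∑ i, c i • v' i - ∑ i, c i • v i)
      by abel]
    exact Λ.sub_mem hc (hdiff c)
  · rw [← h.sum_mem_iff c, ← Λ.sub_mem_iff_left (hdiff c), sub_sub_cancel]

theorem exists_linearMap_dvd_sub (h : IsCyclicDecomposition Λ d v) {κ : Type*} [Fintype κ]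
    (b : Basis κ ℤ M) (i₀ : ι) :
    ∃ φ : M →ₗ[ℤ] ℤ, ∀ x (c : ι → ℤ), x - ∑ i, c i • v i ∈ Λ → (d i₀ : ℤ) ∣ φ x - c i₀ := by
  choose c hc using fun j => h.exists_sub_sum_mem (b j)
  refine ⟨b.constr ℤ fun j => c j i₀, fun x c' hc' => ?_⟩
  set r := b.repr x
  have hx : x - ∑ i, (∑ j, r j * c j i) • v i ∈ Λ := by
    have : x - ∑ i, (∑ j, r j * c j i) • v i = ∑ j, r j • (b j - ∑ i, c j i • v i) := by
      simp only [smul_sub, Finset.smul_sum, smul_smul, Finset.sum_sub_distrib, Finset.sum_smul,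
        b.sum_repr x, r]
      rw [Finset.sum_comm]
    rw [this]
    exact Λ.sum_mem fun j _ => Λ.smul_mem _ (hc j)
  have hφ : b.constr ℤ (fun j => c j i₀) x = ∑ j, r j * c j i₀ := by
    simp [Basis.constr_apply_fintype, r]
  rw [hφ, ← neg_sub, dvd_neg]
  exact h.dvd_sub_of_sub_mem hc' hx i₀

theorem exists_surjective_linearMap (h : IsCyclicDecomposition Λ d v) (b : Basis ι ℤ M)
    (i₀ : ι) : ∃ ψ : M →ₗ[ℤ] ℤ, Function.Surjective ψ ∧ (∀ x ∈ Λ, (d i₀ : ℤ) ∣ ψ x) ∧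
      ∀ i ≠ i₀, (d i₀ : ℤ) ∣ ψ (v i) := by
  classical
  obtain ⟨φ, hφ⟩ := h.exists_linearMap_dvd_sub b i₀
  have hΛ : ∀ x ∈ Λ, (d i₀ : ℤ) ∣ φ x := fun x hx => by simpa using hφ x 0 (by simpa using hx)
  have hv (i : ι) : (d i₀ : ℤ) ∣ φ (v i) - (Pi.single i 1 : ι → ℤ) i₀ :=
    hφ (v i) (Pi.single i 1) (by simp [Pi.single_apply, ite_smul])
  by_cases hφ0 : φ = 0
  · have hunit : (d i₀ : ℤ) ∣ 1 := by simpa [hφ0] using hv i₀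
    exact ⟨b.coord i₀, fun t => ⟨t • b i₀, by simp⟩, fun _ _ => hunit.trans (one_dvd _),
      fun _ _ => hunit.trans (one_dvd _)⟩
  obtain ⟨g, ψ, hψ, hφψ⟩ := φ.exists_surjective_mul_eq hφ0
  have hg : IsCoprime (d i₀ : ℤ) g := by
    obtain ⟨k, hk⟩ := hv i₀
    rw [Pi.single_eq_same, hφψ] at hk
    exact ⟨-k, ψ (v i₀), by linear_combination hk⟩
  have hdiv : ∀ x, (d i₀ : ℤ) ∣ φ x → (d i₀ : ℤ) ∣ ψ x := fun x hx =>
    hg.dvd_of_dvd_mul_left (hφψ x ▸ hx)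
  refine ⟨ψ, hψ, fun x hx => hdiv x (hΛ x hx), fun i hi => hdiv _ ?_⟩
  simpa [Pi.single_eq_of_ne' hi] using hv i

end

section

variable {n : ℕ} {d : Fin (n + 1) → ℕ} {v : Fin (n + 1) → M}

theorem isCoprime_apply_last (h : IsCyclicDecomposition Λ d v) {ψ : M →ₗ[ℤ] ℤ}
    (hψ : Function.Surjective ψ) (hΛ : ∀ x ∈ Λ, (d (Fin.last n) : ℤ) ∣ ψ x)
    (hv : ∀ j : Fin n, v j.castSucc ∈ LinearMap.ker ψ) :
    IsCoprime (ψ (v (Fin.last n))) (d (Fin.last n)) := by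
  obtain ⟨u, hu⟩ := hψ 1
  obtain ⟨c, hc⟩ := h.exists_sub_sum_mem u
  obtain ⟨k, hk⟩ := hΛ _ hc
  simp [Fin.sum_univ_castSucc, LinearMap.mem_ker.mp (hv _), hu] at hk
  exact ⟨c (Fin.last n), k, by linear_combination -hk⟩

theorem restrict_ker (h : IsCyclicDecomposition Λ d v) {ψ : M →ₗ[ℤ] ℤ}
    (hΛ : ∀ x ∈ Λ, (d (Fin.last n) : ℤ) ∣ ψ x) (hv : ∀ j : Fin n, v j.castSucc ∈ LinearMap.ker ψ)
    (hcop : IsCoprime (ψ (v (Fin.last n))) (d (Fin.last n))) :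
    IsCyclicDecomposition (Λ.comap (LinearMap.ker ψ).subtype) (fun j => d j.castSucc)
      (fun j => ⟨v j.castSucc, hv j⟩) := by
  have hcoe : ∀ c : Fin n → ℤ,
      ((∑ j, c j • (⟨v j.castSucc, hv j⟩ : LinearMap.ker ψ) : LinearMap.ker ψ) : M) =
        ∑ i, (Fin.snoc c 0 : Fin (n + 1) → ℤ) i • v i := by
    intro c
    simp [Fin.sum_univ_castSucc]
  refine ⟨fun x => ?_, fun c => ?_⟩
  · obtain ⟨c, hc⟩ := h.exists_sub_sum_mem x
    have hlast : (d (Fin.last n) : ℤ) ∣ c (Fin.last n) := by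
      have := hΛ _ hc
      simp [Fin.sum_univ_castSucc, LinearMap.mem_ker.mp (hv _)] at this
      exact hcop.symm.dvd_of_dvd_mul_right this
    refine ⟨fun j => c j.castSucc, ?_⟩
    rw [Submodule.mem_comap, Submodule.subtype_apply, Submodule.coe_sub, hcoe]
    have : (x : M) - ∑ i, (Fin.snoc (fun j => c j.castSucc) 0 : Fin (n + 1) → ℤ) i • v i =
        ((x : M) - ∑ i, c i • v i) + c (Fin.last n) • v (Fin.last n) := by
      simp only [Fin.sum_univ_castSucc, Fin.snoc_castSucc, Fin.snoc_last, zero_smul, add_zero]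
      abel
    rw [this]
    exact Λ.add_mem hc ((h.smul_mem_iff _ _).mpr hlast)
  · rw [Submodule.mem_comap, Submodule.subtype_apply, hcoe, h.sum_mem_iff, Fin.forall_fin_succ']
    simp

end

theorem exists_basis_smul_eq_smul {n : ℕ} (b : Basis (Fin n) ℤ M) {d : Fin n → ℕ}
    {v : Fin n → M} (h : IsCyclicDecomposition Λ d v)
    (hd : ∀ i, 0 < d i) (hdvd : ∀ i j, i ≤ j → d i ∣ d j) :
    ∃ B : Basis (Fin n) ℤ Λ, ∀ i, ∃ y : M, y - v i ∈ Λ ∧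
      ∃ a : ℕ, a ≤ d i ∧ Nat.gcd a (d i) = 1 ∧ (d i : ℤ) • y = (a : ℤ) • (B i : M) := by
  induction n generalizing M with
  | zero =>
    have : Subsingleton M := b.repr.toEquiv.subsingleton
    exact ⟨Basis.empty Λ, fun i => i.elim0⟩
  | succ n ih =>
    set e := d (Fin.last n)
    have he : (0 : ℤ) < e := by exact_mod_cast hd _
    have hmax (i) : (d i : ℤ) ∣ e := Int.natCast_dvd_natCast.mpr (hdvd i _ (Fin.le_last i))
    obtain ⟨ψ, hψ, hψΛ, hψv⟩ := h.exists_surjective_linearMap b (Fin.last n)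
    obtain ⟨u, hu⟩ := hψ 1
    have hw : (e : ℤ) • u ∈ Λ := h.smul_mem_of_forall_dvd hmax u
    have hψw : ψ ((e : ℤ) • u) = e := by simp [hu]
    choose v' hv'v hψv' using fun i => Submodule.exists_sub_mem_apply_eq_emod (ψ := ψ) hw (v i)
    rw [hψw] at hψv'
    have h' := h.of_sub_mem hv'v
    have hv'K (j : Fin n) : v' j.castSucc ∈ LinearMap.ker ψ := by
      rw [LinearMap.mem_ker, hψv']
      exact Int.emod_eq_zero_of_dvd (hψv _ (Fin.castSucc_lt_last j).ne)
    have hcop := h'.isCoprime_apply_last hψ hψΛ hv'K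
    obtain ⟨bK⟩ := ψ.nonempty_basis_ker_of_surjective b hψ
    obtain ⟨B', hB'⟩ := ih bK (h'.restrict_ker hψΛ hv'K hcop) (fun j => hd _)
      (fun i j hij => hdvd _ _ (Fin.castSucc_le_castSucc_iff.mpr hij))
    obtain ⟨w', hw', hψw', y, hy, hey⟩ := Submodule.exists_smul_eq_smul_of_isCoprime hw hψw
      ((h'.smul_mem_iff _ _).mpr dvd_rfl) hcop
    obtain ⟨B, hBc, hBl⟩ := Submodule.exists_basis_snoc (ψ := ψ) (Submodule.map_comap_le _ _)
      (fun x hx => by simp [Submodule.map_comap_subtype, hx])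
      (B'.map (Submodule.equivMapOfInjective _ (LinearMap.ker ψ).injective_subtype _)) hw'
      (by rw [hψw']; exact he.ne') (by rw [hψw']; exact hψΛ)
    refine ⟨B, fun i => Fin.lastCases ?_ (fun j => ?_) i⟩
    · obtain ⟨a, ha, hae, hgcd⟩ := Int.exists_natCast_eq_of_isCoprime
        (by rw [hψv']; exact Int.emod_nonneg _ he.ne') (by rw [hψv']; exact Int.emod_lt_of_pos _ he)
        hcop
      exact ⟨y, by simpa using Λ.add_mem hy (hv'v (Fin.last n)), a, hae, hgcd,
        by rw [hBl, hey, ha]⟩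
    · obtain ⟨y', hy', a, ha, hgcd, hya⟩ := hB' j
      refine ⟨y', by simpa using Λ.add_mem hy' (hv'v j.castSucc), a, ha, hgcd, ?_⟩
      rw [hBc]
      simpa using congrArg Subtype.val hya

end IsCyclicDecomposition

/-- Let `Λ` be a full-rank submodule of a free ℤ-module `Λ̄` of rank `n` with
elementary divisors `d₁ | ⋯ | d_n`, and let `λ̄₁,…,λ̄_n ∈ Λ̄` be such that `Λ̄/Λ` is the
internal direct sum of the cyclic groups generated by the `[λ̄ᵢ]`, with `[λ̄ᵢ]` of order
`dᵢ`.  Then there is a ℤ-basis `(λ₁,…,λ_n)` of `Λ` such that each class `λ̄ᵢ + Λ` has a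
representative `λ̄ᵢ'` with `dᵢ·λ̄ᵢ' = aᵢ·λᵢ` for some `aᵢ ≤ dᵢ` with `gcd(aᵢ, dᵢ) = 1`. -/
theorem stmt_5 (n : ℕ) (M : Type) [AddCommGroup M] [Module ℤ M]
    (bbar : Module.Basis (Fin n) ℤ M) (Λ : Submodule ℤ M)
    (d : Fin n → ℕ) (hdpos : ∀ i, 0 < d i) (hdvd : ∀ i j : Fin n, i ≤ j → d i ∣ d j)
    (lam : Fin n → M)
    (hspan : ∀ x : M, ∃ c : Fin n → ℤ, x - ∑ i, c i • lam i ∈ Λ)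
    (hrel : ∀ c : Fin n → ℤ, (∑ i, c i • lam i) ∈ Λ ↔ ∀ i, (d i : ℤ) ∣ c i) :
    ∃ lamB : Module.Basis (Fin n) ℤ ↥Λ, ∀ i, ∃ y : M, y - lam i ∈ Λ ∧
      ∃ a : ℕ, a ≤ d i ∧ Nat.gcd a (d i) = 1 ∧ (d i : ℤ) • y = (a : ℤ) • (lamB i : M) := by
  obtain rfl : ‹Module ℤ M› = AddCommGroup.toIntModule M := Subsingleton.elim _ _
  exact IsCyclicDecomposition.exists_basis_smul_eq_smul bbar ⟨hspan, hrel⟩ hdpos hdvd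
end

section
/- Let O_D be the quadratic order of non-square discriminant D, let n, a, b ∈ ℤ with n, b > 0, set ω = a + b·γ_D and 𝔞 = ℤ·n + ℤ·ω. Then: (1) 𝔞 is an ideal of O_D if and only if b | a, b | n and n | N(ω)/b; (2) if 𝔞 is an ideal of O_D, then 𝔑(𝔞) = n·b; (3) if 𝔞 is an ideal of O_D, then 𝔞 is primitive (i.e. (1/m)·𝔞 ⊆ O_D for an integer m implies m ∈ {−1,1}) if and only if b = 1; (4) a primitive ideal 𝔞 = ℤ·n + ℤ·(a+γ_D) is invertible if and only if gcd(n, N(a+γ_D)/n, tr(a+γ_D)) = 1, and in that case 𝔞^{-1} = (1/n)·σ(𝔞); more generally, an ideal 𝔟 = ℤ·α + ℤ·β of O_D is invertible if and only if gcd(N(α), N(β), tr(σ(α)·β)) = 𝔑(𝔟), and in that case 𝔟^{-1} = (1/𝔑(𝔟))·σ(𝔟). -/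
/-- `A` is an ideal of the order `O` (both regarded as ℤ-submodules of `K`). -/
def IsIdealOfOrd {K : Type} [Field K] (O A : Submodule ℤ K) : Prop :=
  A ≤ O ∧ ∀ x ∈ O, ∀ y ∈ A, x * y ∈ A

/-- The norm `𝔑(A) = [O : A]` of an ideal `A` of the order `O`. -/
noncomputable def idealNorm {K : Type} [Field K] (O A : Submodule ℤ K) : ℕ :=
  Nat.card (↥O ⧸ Submodule.comap O.subtype A)

/-!
Writing elements of `O_D = ℤ + ℤγ` as `m + lγ` identifies ideals with sublattices of `ℤ²`, and
every such lattice has a basis `(n, 0), (a, b)`. Since `γ² = Dγ - (D² - D)/4`, stability under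
multiplication by `γ` amounts to the divisibility conditions of (1), and the index is the
determinant `n b`. A nonzero ideal is thus `c 𝔞₀` with `𝔞₀ = ℤn + ℤ(a + γ)` and `N(a + γ) = nM`,
and `𝔞₀ σ(𝔞₀) = n (ℤn + ℤσ(a + γ) + ℤ(a + γ) + ℤM)`, which is `n O_D` when
`g = gcd(n, M, tr(a + γ)) = 1`. If `g > 1`, then `(a + γ)/g ∉ O_D` maps `𝔞₀` into itself, which is
impossible for an invertible ideal. In general, the `ℤ`-span of the norms of the elements of
`𝔟 = ℤα + ℤβ` is spanned by `N(α)`, `N(β)`, `tr(σ(α)β)` for every basis; computing it in the basis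
`c n, c (a + γ)` gives `gcd(N(α), N(β), tr(σ(α)β)) = 𝔑(𝔟) · g`.
-/

open Submodule

theorem mem_span_pair_iff_intCast {K : Type*} [Ring K] {p q x : K} :
    x ∈ span ℤ {p, q} ↔ ∃ s t : ℤ, (s : K) * p + t * q = x := by
  simp only [mem_span_pair, zsmul_eq_mul]

theorem span_pair_mul_span_pair {R A : Type*} [CommSemiring R] [CommSemiring A] [Algebra R A]
    (p q r s : A) :
    span R {p, q} * span R {r, s} = span R {p * r, p * s, q * r, q * s} := by
  rw [span_mul_span]
  congr 1
  ext x
  simp only [Set.mem_mul, Set.mem_insert_iff, Set.mem_singleton_iff]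
  aesop

theorem span_image_span_pair {M N : Type*} [AddCommGroup M] [AddCommGroup N] (f : M →+ N)
    (p q : M) : span ℤ (f '' span ℤ {p, q}) = span ℤ {f p, f q} := by
  have h := span_image (R := ℤ) (s := (span ℤ {p, q} : Set M)) f.toIntLinearMap
  rw [span_eq, map_span] at h
  simpa [Set.image_pair] using h

theorem span_image_const_mul_map_span_pair {R S : Type*} [Ring R] [Ring S] (σ : R →+* S) (k : S)
    (p q : R) :
    span ℤ ((fun x => k * σ x) '' span ℤ {p, q}) = span ℤ {k * σ p, k * σ q} :=
  span_image_span_pair ((AddMonoidHom.mulLeft k).comp σ.toAddMonoidHom) p q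

theorem span_image_mul_map_self_span_pair {K : Type*} [CommRing K] (σ : K →+* K) (α β : K) :
    span ℤ ((fun z => z * σ z) '' span ℤ {α, β}) =
      span ℤ {α * σ α, β * σ β, σ α * β + α * σ β} := by
  apply le_antisymm
  · rw [span_le]
    rintro _ ⟨z, hz, rfl⟩
    obtain ⟨s, t, rfl⟩ := mem_span_pair_iff_intCast.mp hz
    have : ((s : K) * α + t * β) * σ ((s : K) * α + t * β) =
        (s * s : ℤ) • (α * σ α) + (t * t : ℤ) • (β * σ β) + (s * t : ℤ) • (σ α * β + α * σ β) := by
      simp only [map_add, map_mul, map_intCast, zsmul_eq_mul, Int.cast_mul]; ring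
    simp only [SetLike.mem_coe]
    rw [this]
    refine add_mem (add_mem ?_ ?_) ?_ <;> refine smul_mem _ _ (subset_span ?_) <;> simp
  · have hmem : ∀ z ∈ span ℤ {α, β}, z * σ z ∈ span ℤ ((fun z => z * σ z) '' span ℤ {α, β}) :=
      fun z hz => subset_span ⟨z, hz, rfl⟩
    have hα := hmem α (subset_span (by simp))
    have hβ := hmem β (subset_span (by simp))
    have hαβ := hmem (α + β) (add_mem (subset_span (by simp)) (subset_span (by simp)))
    have htr : σ α * β + α * σ β = (α + β) * σ (α + β) - α * σ α - β * σ β := by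
      rw [map_add]; ring
    rw [span_le, Set.insert_subset_iff, Set.insert_subset_iff, Set.singleton_subset_iff, htr]
    exact ⟨hα, hβ, sub_mem (sub_mem hαβ hα) hβ⟩

theorem mem_of_forall_mul_mem_of_mul_eq {R A : Type*} [CommSemiring R] [CommSemiring A]
    [Algebra R A] {O Q J : Submodule R A} {x : A} (hO : (1 : A) ∈ O)
    (hx : ∀ y ∈ Q, x * y ∈ Q) (hQJ : Q * J = O) : x ∈ O := by
  subst hQJ
  have hmul : ∀ y ∈ Q * J, x * y ∈ Q * J := fun y hy =>
    Submodule.mul_induction_on hy (fun q hq j hj => mul_assoc x q j ▸ mul_mem_mul (hx q hq) hj)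
      fun y z hy hz => (mul_add x y z).symm ▸ add_mem hy hz
  simpa using hmul 1 hO

theorem intCast_mem_span_intCast_iff {K : Type*} [Ring K] [CharZero K] {d x : ℤ} :
    (x : K) ∈ span ℤ {(d : K)} ↔ d ∣ x := by
  simp only [mem_span_singleton, zsmul_eq_mul, ← Int.cast_mul, Int.cast_inj,
    dvd_iff_exists_eq_mul_left, eq_comm]

theorem Int.gcd_eq_gcd_of_span_intCast_eq {K : Type*} [Ring K] [CharZero K] {x y z x' y' z' : ℤ}
    (h : span ℤ {(x : K), (y : K), (z : K)} = span ℤ {(x' : K), (y' : K), (z' : K)}) :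
    Int.gcd x (Int.gcd y z) = Int.gcd x' (Int.gcd y' z') := by
  have hdvd : ∀ x y z d : ℤ, d ∣ (Int.gcd x (Int.gcd y z) : ℤ) ↔
      span ℤ {(x : K), (y : K), (z : K)} ≤ span ℤ {(d : K)} := fun x y z d => by
    simp only [Int.dvd_coe_gcd_iff, span_le, Set.insert_subset_iff, Set.singleton_subset_iff,
      SetLike.mem_coe, intCast_mem_span_intCast_iff]
  apply Nat.dvd_antisymm <;> rw [← Int.natCast_dvd_natCast, hdvd]
  · rw [← h, ← hdvd]
  · rw [h, ← hdvd]

theorem Int.exists_nonneg_forall_mem_iff_dvd (S : Submodule ℤ ℤ) :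
    ∃ d : ℤ, 0 ≤ d ∧ ∀ z, z ∈ S ↔ d ∣ z := by
  obtain ⟨d, rfl⟩ := (IsPrincipalIdealRing.principal S).principal
  exact ⟨d.natAbs, by positivity, fun z => by
    rw [Int.natAbs_dvd, ← Ideal.mem_span_singleton]⟩

theorem Int.exists_submodule_prod_eq_span_pair (L : Submodule ℤ (ℤ × ℤ)) {m x l : ℤ} (hm : m ≠ 0)
    (hmL : (m, 0) ∈ L) (hl : l ≠ 0) (hlL : (x, l) ∈ L) :
    ∃ n a b : ℤ, 0 < n ∧ 0 < b ∧ L = span ℤ {(n, 0), (a, b)} := by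
  obtain ⟨n, hn0, hn⟩ := exists_nonneg_forall_mem_iff_dvd (L.comap (LinearMap.inl ℤ ℤ ℤ))
  obtain ⟨b, hb0, hb⟩ := exists_nonneg_forall_mem_iff_dvd (L.map (LinearMap.snd ℤ ℤ ℤ))
  obtain ⟨⟨a, b'⟩, habL, rfl : b' = b⟩ := (hb b).mpr dvd_rfl
  have hnL : (n, 0) ∈ L := (hn n).mpr dvd_rfl
  refine ⟨n, a, b', ?_, ?_, le_antisymm ?_ ?_⟩
  · exact hn0.lt_of_ne fun h => hm (zero_dvd_iff.mp (h ▸ (hn m).mp hmL))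
  · exact hb0.lt_of_ne fun h => hl (zero_dvd_iff.mp (h ▸ (hb l).mp ⟨_, hlL, rfl⟩))
  · rintro ⟨u, v⟩ huv
    obtain ⟨t, rfl⟩ := (hb v).mp ⟨_, huv, rfl⟩
    obtain ⟨s, hs⟩ := (hn (u - a * t)).mp <| by
      have := L.sub_mem huv (L.smul_mem t habL)
      simpa [mul_comm] using this
    refine mem_span_pair.mpr ⟨s, t, ?_⟩
    simp only [Prod.smul_mk, smul_eq_mul, Prod.mk_add_mk, Prod.mk.injEq]
    constructor <;> linarith
  · rw [span_le, Set.insert_subset_iff, Set.singleton_subset_iff]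
    exact ⟨hnL, habL⟩

theorem Int.card_quotient_span_pair {n a b : ℤ} (hn : n ≠ 0) (hb : b ≠ 0) :
    Nat.card ((ℤ × ℤ) ⧸ span ℤ {(n, 0), (a, b)}) = (n * b).natAbs := by
  have hli : LinearIndependent ℤ ![(n, 0), (a, b)] := by
    rw [LinearIndependent.pair_iff]
    intro s t h
    simp only [Prod.smul_mk, smul_eq_mul, Prod.mk_add_mk, mul_zero, zero_add, Prod.mk_eq_zero] at h
    have ht : t = 0 := by simpa [hb] using h.2
    subst ht
    simpa [hn] using h.1
  let bL := (Module.Basis.span hli).map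
    (LinearEquiv.ofEq _ _ (by rw [Matrix.range_cons_cons_empty]))
  rw [← Submodule.natAbs_det_basis_change (Module.Basis.finTwoProd ℤ) _ bL, Module.Basis.det_apply,
    Matrix.det_fin_two]
  simp [bL, Module.Basis.toMatrix_apply, Module.Basis.span_apply]

theorem idealNorm_range_eq_card {K : Type} {M : Type*} [Field K] [AddCommGroup M] (φ : M →ₗ[ℤ] K)
    (hφ : Function.Injective φ) (A : Submodule ℤ K) :
    idealNorm (LinearMap.range φ) A = Nat.card (M ⧸ A.comap φ) := by
  let e := LinearEquiv.ofInjective φ hφ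
  have : (A.comap φ).map (e : M →ₗ[ℤ] LinearMap.range φ) = A.comap (LinearMap.range φ).subtype := by
    ext ⟨y, x, rfl⟩
    simp [e]
  exact Nat.card_congr (Submodule.Quotient.equiv _ _ e this).toEquiv.symm

namespace QuadraticOrder

variable {K : Type} [Field K]

def coordMap (γ : K) : ℤ × ℤ →ₗ[ℤ] K :=
  (LinearMap.toSpanSingleton ℤ K 1).coprod (LinearMap.toSpanSingleton ℤ K γ)

@[simp]
theorem coordMap_apply (γ : K) (p : ℤ × ℤ) : coordMap γ p = p.1 + p.2 * γ := by
  simp [coordMap, zsmul_eq_mul]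

def order (γ : K) : Submodule ℤ K := LinearMap.range (coordMap γ)

theorem mem_order {γ x : K} : x ∈ order γ ↔ ∃ m l : ℤ, (m : K) + l * γ = x := by
  simp [order]

theorem intCast_add_mul_mem_order (γ : K) (m l : ℤ) : (m : K) + l * γ ∈ order γ :=
  mem_order.mpr ⟨m, l, rfl⟩

theorem intCast_mem_order (γ : K) (m : ℤ) : (m : K) ∈ order γ := by
  simpa using intCast_add_mul_mem_order γ m 0

theorem self_mem_order (γ : K) : γ ∈ order γ := by
  simpa using intCast_add_mul_mem_order γ 0 1

theorem order_eq_span (γ : K) : order γ = span ℤ {1, γ} := by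
  ext x
  simp [mem_order, mem_span_pair_iff_intCast]

theorem isIdealOfOrd_span_pair_iff {γ x y : K} :
    IsIdealOfOrd (order γ) (span ℤ {x, y}) ↔
      x ∈ order γ ∧ y ∈ order γ ∧ γ * x ∈ span ℤ {x, y} ∧ γ * y ∈ span ℤ {x, y} := by
  have hx : x ∈ span ℤ {x, y} := subset_span (by simp)
  have hy : y ∈ span ℤ {x, y} := subset_span (by simp)
  constructor
  · rintro ⟨hle, hmul⟩
    exact ⟨hle hx, hle hy, hmul γ (self_mem_order γ) x hx, hmul γ (self_mem_order γ) y hy⟩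
  · rintro ⟨hxO, hyO, hγx, hγy⟩
    refine ⟨span_le.mpr (Set.insert_subset_iff.mpr ⟨hxO, Set.singleton_subset_iff.mpr hyO⟩), ?_⟩
    rintro _ hz _ hw
    obtain ⟨m, l, rfl⟩ := mem_order.mp hz
    obtain ⟨s, t, rfl⟩ := mem_span_pair_iff_intCast.mp hw
    have : ((m : K) + l * γ) * (s * x + t * y) =
        (m * s : ℤ) • x + (m * t : ℤ) • y + (l * s : ℤ) • (γ * x) + (l * t : ℤ) • (γ * y) := by
      simp only [zsmul_eq_mul, Int.cast_mul]; ring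
    rw [this]
    refine add_mem (add_mem (add_mem ?_ ?_) ?_) ?_ <;> apply smul_mem <;> assumption

def IsPrimitive (O A : Submodule ℤ K) : Prop :=
  ∀ m : ℤ, (∀ x ∈ A, ∃ y ∈ O, x = m * y) → m = 1 ∨ m = -1

variable [CharZero K] {γ : K}

theorem coordMap_injective (hγ : γ ∉ Set.range ((↑) : ℚ → K)) :
    Function.Injective (coordMap γ) := by
  rw [← LinearMap.ker_eq_bot, LinearMap.ker_eq_bot']
  rintro ⟨m, l⟩ h
  rw [coordMap_apply] at h
  have hl : l = 0 := by
    by_contra hl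
    exact hγ ⟨-m / l, by push_cast; field_simp; linear_combination -h⟩
  subst hl
  simpa using h

theorem intCast_add_mul_inj (hγ : γ ∉ Set.range ((↑) : ℚ → K)) {m l m' l' : ℤ} :
    (m : K) + l * γ = m' + l' * γ ↔ m = m' ∧ l = l' := by
  simpa using (coordMap_injective hγ).eq_iff (a := (m, l)) (b := (m', l'))

variable {σ : K →+* K} {T E : ℤ}

theorem sigma_intCast_add_mul (hT : γ + σ γ = T) (m l : ℤ) :
    σ ((m : K) + l * γ) = ((m + l * T : ℤ) : K) + ((-l : ℤ) : K) * γ := by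
  rw [map_add, map_mul, map_intCast, map_intCast]
  push_cast
  linear_combination (l : K) * hT

theorem sigma_mem_order (hT : γ + σ γ = T) {x : K} (hx : x ∈ order γ) : σ x ∈ order γ := by
  obtain ⟨m, l, rfl⟩ := mem_order.mp hx
  rw [sigma_intCast_add_mul hT]
  exact intCast_add_mul_mem_order γ _ _

theorem mul_sigma_intCast_add_mul (hT : γ + σ γ = T) (hE : γ * σ γ = E) (m l : ℤ) :
    ((m : K) + l * γ) * σ ((m : K) + l * γ) = ((m * m + m * l * T + l * l * E : ℤ) : K) := by
  rw [map_add, map_mul, map_intCast, map_intCast]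
  push_cast
  linear_combination ((m : K) * l) * hT + (l : K) ^ 2 * hE

theorem exists_mul_sigma_eq_intCast (hT : γ + σ γ = T) (hE : γ * σ γ = E) {x : K}
    (hx : x ∈ order γ) : ∃ N : ℤ, x * σ x = N := by
  obtain ⟨m, l, rfl⟩ := mem_order.mp hx
  exact ⟨_, mul_sigma_intCast_add_mul hT hE m l⟩

theorem isIdealOfOrd_iff (hγ : γ ∉ Set.range ((↑) : ℚ → K)) (hT : γ + σ γ = T)
    (hE : γ * σ γ = E) {n a b : ℤ} (hb : b ≠ 0) :
    IsIdealOfOrd (order γ) (span ℤ {(n : K), a + b * γ}) ↔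
      b ∣ a ∧ b ∣ n ∧ n * b ∣ a * a + a * b * T + b * b * E := by
  have hγγ : γ * γ = T * γ - E := by linear_combination γ * hT - hE
  have hmem : ∀ {z : K} {p q : ℤ}, z = p + q * γ →
      (z ∈ span ℤ {(n : K), a + b * γ} ↔ ∃ s t : ℤ, s * n + t * a = p ∧ t * b = q) := by
    intro z p q hz
    rw [mem_span_pair_iff_intCast, hz]
    refine exists₂_congr fun s t => ?_
    rw [← intCast_add_mul_inj hγ]
    push_cast
    constructor <;> intro h <;> linear_combination h
  rw [isIdealOfOrd_span_pair_iff, hmem (p := 0) (q := n) (by push_cast; ring),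
    hmem (p := -(b * E)) (q := a + b * T) (by push_cast; linear_combination b * hγγ)]
  simp only [mem_order]
  constructor
  · rintro ⟨-, -, ⟨s, t, -, ht⟩, ⟨s', t', hs', ht'⟩⟩
    exact ⟨⟨t' - T, by linear_combination -ht'⟩, ⟨t, by linear_combination -ht⟩,
      ⟨-s', by linear_combination -a * ht' + b * hs'⟩⟩
  · rintro ⟨⟨a₀, rfl⟩, ⟨n₀, rfl⟩, ⟨M, hM⟩⟩
    have hM₀ : a₀ * a₀ + a₀ * T + E = n₀ * M :=
      mul_left_cancel₀ (mul_ne_zero hb hb) (by linear_combination hM)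
    exact ⟨⟨b * n₀, 0, by simp⟩, ⟨b * a₀, b, rfl⟩, ⟨-a₀, n₀, by ring, by ring⟩,
      ⟨-M, a₀ + T, by linear_combination b * hM₀, by ring⟩⟩

theorem idealNorm_span (hγ : γ ∉ Set.range ((↑) : ℚ → K)) {n a b : ℤ} (hn : n ≠ 0) (hb : b ≠ 0) :
    idealNorm (order γ) (span ℤ {(n : K), a + b * γ}) = (n * b).natAbs := by
  have hspan : span ℤ {(n : K), a + b * γ} =
      (span ℤ {((n, 0) : ℤ × ℤ), (a, b)}).map (coordMap γ) := by
    simp [map_span, Set.image_pair]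
  rw [order, idealNorm_range_eq_card _ (coordMap_injective hγ), hspan,
    comap_map_eq_of_injective (coordMap_injective hγ), Int.card_quotient_span_pair hn hb]

theorem isPrimitive_iff (hγ : γ ∉ Set.range ((↑) : ℚ → K)) {n a b : ℤ} (hb : 0 < b)
    (hba : b ∣ a) (hbn : b ∣ n) :
    IsPrimitive (order γ) (span ℤ {(n : K), a + b * γ}) ↔ b = 1 := by
  constructor
  · intro h
    obtain ⟨a₀, rfl⟩ := hba
    obtain ⟨n₀, rfl⟩ := hbn
    refine (h b fun x hx => ?_).resolve_right (by omega)
    obtain ⟨s, t, rfl⟩ := mem_span_pair_iff_intCast.mp hx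
    exact ⟨_, intCast_add_mul_mem_order γ (s * n₀ + t * a₀) t, by push_cast; ring⟩
  · rintro rfl m h
    obtain ⟨y, hy, hay⟩ := h (a + 1 * γ) (subset_span (by simp))
    obtain ⟨u, v, rfl⟩ := mem_order.mp hy
    have := ((intCast_add_mul_inj hγ (m := a) (l := 1) (m' := m * u) (l' := m * v)).mp
      (by push_cast; rw [hay]; ring)).2
    exact Int.eq_one_or_neg_one_of_mul_eq_one this.symm

theorem exists_eq_span_of_isIdealOfOrd (hT : γ + σ γ = T) (hE : γ * σ γ = E)
    {𝔅 : Submodule ℤ K} (h𝔅 : IsIdealOfOrd (order γ) 𝔅) (hne : 𝔅 ≠ ⊥) :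
    ∃ n a b : ℤ, 0 < n ∧ 0 < b ∧ 𝔅 = span ℤ {(n : K), a + b * γ} := by
  obtain ⟨x, hx, hx0⟩ := exists_mem_ne_zero_of_ne_bot hne
  obtain ⟨N, hN⟩ := exists_mul_sigma_eq_intCast hT hE (h𝔅.1 hx)
  have hN0 : N ≠ 0 := by
    rintro rfl
    simp [hx0] at hN
  have hN𝔅 : (N : K) ∈ 𝔅 := by
    rw [← hN, mul_comm]
    exact h𝔅.2 _ (sigma_mem_order hT (h𝔅.1 hx)) x hx
  have hNγ𝔅 : γ * N ∈ 𝔅 := h𝔅.2 γ (self_mem_order γ) _ hN𝔅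
  obtain ⟨n, a, b, hn, hb, hL⟩ := Int.exists_submodule_prod_eq_span_pair
    (𝔅.comap (coordMap γ)) hN0 (m := N) (by simpa using hN𝔅) hN0 (x := 0)
    (by simpa [mul_comm] using hNγ𝔅)
  refine ⟨n, a, b, hn, hb, ?_⟩
  rw [← map_comap_eq_self (f := coordMap γ) h𝔅.1, hL, map_span, Set.image_pair]
  simp

theorem exists_eq_span_primitive (hγ : γ ∉ Set.range ((↑) : ℚ → K)) (hT : γ + σ γ = T)
    (hE : γ * σ γ = E) {𝔅 : Submodule ℤ K} (h𝔅 : IsIdealOfOrd (order γ) 𝔅) (hne : 𝔅 ≠ ⊥) :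
    ∃ c n a M : ℤ, 0 < c ∧ 0 < n ∧ (a + γ) * σ (a + γ) = n * M ∧
      𝔅 = span ℤ {(c : K) * n, c * (a + γ)} := by
  obtain ⟨n', a', c, hn', hc, rfl⟩ := exists_eq_span_of_isIdealOfOrd hT hE h𝔅 hne
  obtain ⟨⟨a, rfl⟩, ⟨n, rfl⟩, ⟨M, hM⟩⟩ := (isIdealOfOrd_iff hγ hT hE hc.ne').mp h𝔅
  have hM' : a * a + a * 1 * T + 1 * 1 * E = n * M :=
    mul_left_cancel₀ (mul_ne_zero hc.ne' hc.ne') (by linear_combination hM)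
  refine ⟨c, n, a, M, hc, pos_of_mul_pos_right hn' hc.le, ?_, by push_cast; ring_nf⟩
  have := mul_sigma_intCast_add_mul hT hE a 1
  rw [hM'] at this
  push_cast at this
  simpa using this

section Invertibility

variable {n a M t : ℤ}

theorem gcd_eq_one_of_mul_eq_order (hγ : γ ∉ Set.range ((↑) : ℚ → K)) (hn : n ≠ 0)
    (hN : (a + γ) * σ (a + γ) = n * M) (ht : a + γ + σ (a + γ) = t) {c : K}
    {J : Submodule ℤ K} (hJ : span ℤ {c * n, c * (a + γ)} * J = order γ) :
    Int.gcd n (Int.gcd M t) = 1 := by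
  set g := Int.gcd n (Int.gcd M t)
  obtain ⟨n₁, hn₁⟩ : (g : ℤ) ∣ n := Int.gcd_dvd_left ..
  obtain ⟨M₁, hM₁⟩ : (g : ℤ) ∣ M := (Int.gcd_dvd_right ..).trans (Int.gcd_dvd_left ..)
  obtain ⟨t₁, ht₁⟩ : (g : ℤ) ∣ t := (Int.gcd_dvd_right ..).trans (Int.gcd_dvd_right ..)
  have hg : (g : K) ≠ 0 := by
    have : g ≠ 0 := Int.gcd_ne_zero_left hn
    exact_mod_cast this
  have hsq : (a + γ) * (a + γ) = t * (a + γ) - n * M := by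
    linear_combination (a + γ) * ht - hN
  have hstab : ∀ y ∈ span ℤ {c * n, c * (a + γ)},
      (a + γ) / g * y ∈ span ℤ {c * n, c * (a + γ)} := by
    intro y hy
    obtain ⟨s, s', rfl⟩ := mem_span_pair_iff_intCast.mp hy
    refine mem_span_pair_iff_intCast.mpr ⟨-(s' * M₁), s * n₁ + s' * t₁, ?_⟩
    rw [hn₁, hM₁, ht₁] at hsq
    rw [hn₁]
    field_simp
    push_cast at hsq ⊢
    linear_combination (-(s' : K) * c) * hsq
  obtain ⟨m, l, hml⟩ := mem_order.mp <|
    mem_of_forall_mul_mem_of_mul_eq (by simpa using intCast_mem_order γ 1) hstab hJ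
  have hgl : (g : ℤ) * l = 1 :=
    ((intCast_add_mul_inj hγ (m := g * m) (m' := a) (l' := 1)).mp <| by
      push_cast
      rw [mul_assoc, ← mul_add, hml, mul_div_cancel₀ _ hg, one_mul]).2
  exact_mod_cast Int.eq_one_of_mul_eq_one_right (by positivity) hgl

theorem span_eq_order_of_gcd_eq_one (hT : γ + σ γ = T) (ht : a + γ + σ (a + γ) = t)
    (hg : Int.gcd n (Int.gcd M t) = 1) :
    span ℤ {(n : K), σ (a + γ), a + γ, (M : K)} = order γ := by
  have hω : (a : K) + γ ∈ order γ := by simpa using intCast_add_mul_mem_order γ a 1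
  set S := span ℤ {(n : K), σ (a + γ), a + γ, (M : K)}
  have hnS : (n : K) ∈ S := subset_span (by simp)
  have hσS : σ (a + γ) ∈ S := subset_span (by simp)
  have hωS : (a : K) + γ ∈ S := subset_span (by simp)
  have hMS : (M : K) ∈ S := subset_span (by simp)
  apply le_antisymm
  · simp only [S, span_le, Set.insert_subset_iff, Set.singleton_subset_iff, SetLike.mem_coe]
    exact ⟨intCast_mem_order γ n, sigma_mem_order hT hω, hω, intCast_mem_order γ M⟩
  obtain ⟨u, v, huv⟩ := Int.isCoprime_iff_gcd_eq_one.mpr hg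
  have hbez : (1 : K) = u • (n : K) + (v * Int.gcdA M t) • (M : K) +
      (v * Int.gcdB M t) • (a + γ + σ (a + γ)) := by
    rw [ht]
    have := congrArg (Int.cast : ℤ → K) (huv.symm.trans (by rw [Int.gcd_eq_gcd_ab M t]))
    simp only [zsmul_eq_mul]
    push_cast at this ⊢
    linear_combination this
  have h1S : (1 : K) ∈ S := by
    rw [hbez]
    exact add_mem (add_mem (smul_mem _ _ hnS) (smul_mem _ _ hMS))
      (smul_mem _ _ (add_mem hωS hσS))
  have hγS : γ ∈ S := by
    have := sub_mem hωS (smul_mem S a h1S)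
    rwa [zsmul_eq_mul, mul_one, add_sub_cancel_left] at this
  rw [order_eq_span, span_le, Set.insert_subset_iff, Set.singleton_subset_iff]
  exact ⟨h1S, hγS⟩

theorem mul_span_sigma_eq_order (hT : γ + σ γ = T) (hn : n ≠ 0)
    (hN : (a + γ) * σ (a + γ) = n * M) (ht : a + γ + σ (a + γ) = t)
    (hg : Int.gcd n (Int.gcd M t) = 1) {c : K} (hc : c ≠ 0) :
    span ℤ {c * n, c * (a + γ)} *
        span ℤ {(c * σ c * n)⁻¹ * σ (c * n), (c * σ c * n)⁻¹ * σ (c * (a + γ))} = order γ := by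
  have hσc : σ c ≠ 0 := (map_ne_zero σ).mpr hc
  have hnK : (n : K) ≠ 0 := Int.cast_ne_zero.mpr hn
  have hprod : ∀ x y : K, c * x * ((c * σ c * n)⁻¹ * (σ c * y)) = x * y / n := fun x y => by
    field_simp
  rw [span_pair_mul_span_pair, ← span_eq_order_of_gcd_eq_one hT ht hg]
  simp only [map_mul, map_intCast, hprod, hN, mul_div_cancel_left₀ _ hnK,
    mul_div_cancel_right₀ _ hnK]

theorem exists_mul_eq_order_iff (hγ : γ ∉ Set.range ((↑) : ℚ → K)) (hT : γ + σ γ = T)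
    (hn : n ≠ 0) (hN : (a + γ) * σ (a + γ) = n * M) (ht : a + γ + σ (a + γ) = t)
    {c : K} (hc : c ≠ 0) :
    (∃ J, span ℤ {c * n, c * (a + γ)} * J = order γ) ↔ Int.gcd n (Int.gcd M t) = 1 :=
  ⟨fun ⟨_, hJ⟩ => gcd_eq_one_of_mul_eq_order hγ hn hN ht hJ,
    fun hg => ⟨_, mul_span_sigma_eq_order hT hn hN ht hg hc⟩⟩

theorem invertible_iff_gcd_eq_one (hγ : γ ∉ Set.range ((↑) : ℚ → K)) (hT : γ + σ γ = T)
    (hn : n ≠ 0) (hN : (a + γ) * σ (a + γ) = n * M) (ht : a + γ + σ (a + γ) = t) :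
    ((∃ J, span ℤ {(n : K), a + γ} * J = order γ) ↔ Int.gcd n (Int.gcd M t) = 1) ∧
      ((∃ J, span ℤ {(n : K), a + γ} * J = order γ) →
        span ℤ {(n : K), a + γ} * span ℤ ((fun x => (n : K)⁻¹ * σ x) '' span ℤ {(n : K), a + γ}) =
          order γ) := by
  have h := exists_mul_eq_order_iff hγ hT hn hN ht one_ne_zero
  have h' := fun hg => mul_span_sigma_eq_order hT hn hN ht hg (c := 1) one_ne_zero
  simp only [one_mul, map_one, map_intCast] at h h'
  rw [span_image_const_mul_map_span_pair, map_intCast, h]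
  exact ⟨Iff.rfl, h'⟩

theorem gcd_norms_eq (hn : 0 ≤ n) (hN : (a + γ) * σ (a + γ) = n * M)
    (ht : a + γ + σ (a + γ) = t) {c : ℤ} {α β : K}
    (hspan : span ℤ {α, β} = span ℤ {(c : K) * n, c * (a + γ)}) {Nα Nβ Nαβ : ℤ}
    (hNα : α * σ α = Nα) (hNβ : β * σ β = Nβ) (hNαβ : σ α * β + α * σ β = Nαβ) :
    Int.gcd Nα (Int.gcd Nβ Nαβ) = (c * c * n).natAbs * Int.gcd n (Int.gcd M t) := by
  set k := (c * c * n).natAbs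
  have hk : (k : K) = c * c * n := by
    rw [Nat.cast_natAbs, abs_of_nonneg (mul_nonneg (mul_self_nonneg c) hn)]
    push_cast
    ring
  have h := span_image_mul_map_self_span_pair σ α β
  rw [hspan, span_image_mul_map_self_span_pair, hNα, hNβ, hNαβ] at h
  have h₁ : (c : K) * n * σ (c * n) = ((k * n : ℤ) : K) := by
    push_cast
    rw [hk, map_mul, map_intCast, map_intCast]
    ring
  have h₂ : (c : K) * (a + γ) * σ (c * (a + γ)) = ((k * M : ℤ) : K) := by
    push_cast
    rw [hk, map_mul, map_intCast]
    linear_combination (c : K) ^ 2 * hN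
  have h₃ : σ (c * n) * (c * (a + γ)) + c * n * σ (c * (a + γ)) = ((k * t : ℤ) : K) := by
    push_cast
    rw [hk, map_mul, map_mul, map_intCast, map_intCast]
    linear_combination (c : K) ^ 2 * n * ht
  rw [h₁, h₂, h₃] at h
  rw [Int.gcd_eq_gcd_of_span_intCast_eq h.symm, Int.gcd_mul_left, Int.natAbs_natCast,
    Nat.cast_mul, Int.gcd_mul_left, Int.natAbs_natCast]

end Invertibility

theorem invertible_iff_gcd_eq_idealNorm (hγ : γ ∉ Set.range ((↑) : ℚ → K)) (hT : γ + σ γ = T)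
    (hE : γ * σ γ = E) {α β : K} {𝔅 : Submodule ℤ K} (h𝔅 : 𝔅 = span ℤ {α, β})
    (hid : IsIdealOfOrd (order γ) 𝔅) (hne : 𝔅 ≠ ⊥) {Na Nb t : ℤ} (hNa : α * σ α = Na)
    (hNb : β * σ β = Nb) (ht : σ α * β + α * σ β = t) :
    ((∃ J, 𝔅 * J = order γ) ↔ Int.gcd Na (Int.gcd Nb t) = idealNorm (order γ) 𝔅) ∧
      ((∃ J, 𝔅 * J = order γ) →
        𝔅 * span ℤ ((fun x => ((idealNorm (order γ) 𝔅 : ℕ) : K)⁻¹ * σ x) '' 𝔅) = order γ) := by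
  obtain ⟨c, n, a, M, hc, hn, hN, rfl⟩ := exists_eq_span_primitive hγ hT hE hid hne
  have ht₀ : (a : K) + γ + σ (a + γ) = ((2 * a + T : ℤ) : K) := by
    rw [map_add, map_intCast]
    push_cast
    linear_combination hT
  have hnorm : idealNorm (order γ) (span ℤ {(c : K) * n, c * (a + γ)}) = (c * c * n).natAbs := by
    have := idealNorm_span hγ (n := c * n) (a := c * a) (b := c) (by positivity) hc.ne'
    rw [show c * n * c = c * c * n by ring] at this
    rw [← this]
    push_cast
    ring_nf
  have hk : ((c * c * n).natAbs : K) = c * σ c * n := by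
    rw [Nat.cast_natAbs, abs_of_pos (by positivity), map_intCast]
    push_cast
    ring
  rw [gcd_norms_eq hn.le hN ht₀ h𝔅.symm hNa hNb ht, hnorm, hk, span_image_const_mul_map_span_pair,
    exists_mul_eq_order_iff hγ hT hn.ne' hN ht₀ (Int.cast_ne_zero.mpr hc.ne'),
    Nat.mul_eq_left (Int.natAbs_ne_zero.mpr (by positivity))]
  exact ⟨Iff.rfl, fun hg =>
    mul_span_sigma_eq_order hT hn.ne' hN ht₀ hg (Int.cast_ne_zero.mpr hc.ne')⟩

end QuadraticOrder

theorem half_add_sqrt_notMem_range_ratCast {K : Type*} [Field K] [CharZero K] {D : ℕ}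
    (hD : ¬ IsSquare D) {s : K} (hs : s ^ 2 = D) : ((D : K) + s) / 2 ∉ Set.range ((↑) : ℚ → K) := by
  rintro ⟨q, hq⟩
  apply hD
  have : ((2 * q - D) ^ 2 : ℚ) = D := by
    have : (((2 * q - D) ^ 2 : ℚ) : K) = ((D : ℚ) : K) := by
      push_cast
      rw [hq, ← hs]
      ring
    exact_mod_cast this
  exact Rat.isSquare_natCast_iff.mp ⟨2 * q - D, by rw [← sq, this]⟩

theorem half_add_sqrt_add_map {K : Type*} [Field K] [CharZero K] {D : ℕ} {s : K} {σ : K →+* K}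
    (hσ : σ s = -s) : (D + s) / 2 + σ ((D + s) / 2) = ((D : ℤ) : K) := by
  rw [map_div₀, map_add, map_natCast, hσ, map_ofNat]
  push_cast
  ring

theorem half_add_sqrt_mul_map {K : Type*} [Field K] [CharZero K] {D : ℕ} {s : K} {σ : K →+* K}
    (hs : s ^ 2 = D) (hσ : σ s = -s) {e : ℤ} (he : (D : ℤ) * D - D = 4 * e) :
    (D + s) / 2 * σ ((D + s) / 2) = e := by
  have he' : (D : K) * D - D = 4 * e := by exact_mod_cast he
  rw [map_div₀, map_add, map_natCast, hσ, map_ofNat]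
  linear_combination he' / 4 - hs / 4

theorem Nat.exists_sq_sub_eq_four_mul {D : ℕ} (hD : D % 4 = 0 ∨ D % 4 = 1) :
    ∃ e : ℤ, (D : ℤ) * D - D = 4 * e := by
  obtain ⟨k, hk⟩ | ⟨k, hk⟩ : (4 : ℤ) ∣ D ∨ (4 : ℤ) ∣ D - 1 := by omega
  · exact ⟨4 * k * k - k, by rw [hk]; ring⟩
  · exact ⟨D * k, by linear_combination (D : ℤ) * hk⟩

open QuadraticOrder in
theorem stmt_6_general (D : ℕ) (hDns : ¬ IsSquare D)
    (hDmod : D % 4 = 0 ∨ D % 4 = 1)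
    (K : Type) [Field K] [CharZero K]
    (sqrtD : K) (hsq : sqrtD ^ 2 = (D : K))
    (σ : K →+* K) (hσ : σ sqrtD = -sqrtD)
    (OD : Submodule ℤ K)
    (hOD : ∀ x : K, x ∈ OD ↔ ∃ m l : ℤ, x = (m : K) + (l : K) * (((D : K) + sqrtD) / 2))
    (n a b : ℤ) (hn : 0 < n) (hb : 0 < b)
    (ω : K) (hω : ω = (a : K) + (b : K) * (((D : K) + sqrtD) / 2))
    (𝔄 : Submodule ℤ K) (h𝔄 : 𝔄 = Submodule.span ℤ {(n : K), ω}) :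
    -- (1) ideal criterion
    (IsIdealOfOrd OD 𝔄 ↔ b ∣ a ∧ b ∣ n ∧ ∃ m : ℤ, ω * σ ω = ((n * b * m : ℤ) : K)) ∧
    -- (2) the norm is n·b
    (IsIdealOfOrd OD 𝔄 → idealNorm OD 𝔄 = (n * b).toNat) ∧
    -- (3) primitivity criterion
    (IsIdealOfOrd OD 𝔄 →
      ((∀ m : ℤ, (∀ x ∈ 𝔄, ∃ y ∈ OD, x = (m : K) * y) → m = 1 ∨ m = -1) ↔ b = 1)) ∧
    -- (4a) invertibility of a primitive ideal, and its inverse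
    (b = 1 → IsIdealOfOrd OD 𝔄 →
      ∀ Nn t : ℤ, ω * σ ω = ((n * Nn : ℤ) : K) → ω + σ ω = ((t : ℤ) : K) →
        (((∃ J : Submodule ℤ K, 𝔄 * J = OD) ↔ Int.gcd n (Int.gcd Nn t : ℤ) = 1) ∧
          ((∃ J : Submodule ℤ K, 𝔄 * J = OD) →
            𝔄 * Submodule.span ℤ ((fun x => ((n : K))⁻¹ * σ x) '' (𝔄 : Set K)) = OD))) ∧
    -- (4b) invertibility of a general ideal, and its inverse
    (∀ α β : K, ∀ 𝔅 : Submodule ℤ K, 𝔅 = Submodule.span ℤ {α, β} → IsIdealOfOrd OD 𝔅 →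
      𝔅 ≠ ⊥ →
      ∀ Na Nb t : ℤ, α * σ α = (Na : K) → β * σ β = (Nb : K) →
        σ α * β + α * σ β = (t : K) →
        ((∃ J : Submodule ℤ K, 𝔅 * J = OD) ↔
            Int.gcd Na (Int.gcd Nb t : ℤ) = idealNorm OD 𝔅) ∧
        ((∃ J : Submodule ℤ K, 𝔅 * J = OD) →
          𝔅 * Submodule.span ℤ
              ((fun x => ((idealNorm OD 𝔅 : ℕ) : K)⁻¹ * σ x) '' (𝔅 : Set K)) = OD)) := by
  set γ : K := ((D : K) + sqrtD) / 2
  obtain ⟨e, he⟩ := Nat.exists_sq_sub_eq_four_mul hDmod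
  have hT : γ + σ γ = ((D : ℤ) : K) := half_add_sqrt_add_map hσ
  have hE : γ * σ γ = e := half_add_sqrt_mul_map hsq hσ he
  have hirr := half_add_sqrt_notMem_range_ratCast hDns hsq
  obtain rfl : OD = order γ := by
    ext x
    simp only [hOD, mem_order, eq_comm]
  subst h𝔄 hω
  have hid := isIdealOfOrd_iff hirr hT hE hb.ne' (n := n) (a := a)
  refine ⟨?_, fun _ => ?_, fun h => ?_, ?_, fun α β 𝔅 h𝔅 hid𝔅 hne Na Nb t hNa hNb ht =>
    invertible_iff_gcd_eq_idealNorm hirr hT hE h𝔅 hid𝔅 hne hNa hNb ht⟩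
  · rw [hid, mul_sigma_intCast_add_mul hT hE]
    simp only [Int.cast_inj]
    rfl
  · rw [idealNorm_span hirr hn.ne' hb.ne']
    have := mul_pos hn hb
    omega
  · obtain ⟨hba, hbn, -⟩ := hid.mp h
    exact isPrimitive_iff hirr hb hba hbn
  · rintro rfl - Nn t hNn ht
    rw [Int.cast_one, one_mul] at hNn ht ⊢
    push_cast at hNn
    exact invertible_iff_gcd_eq_one hirr hT hn.ne' hNn ht

/-- Lemma on normal forms of ideals of the quadratic order `O_D`. -/
theorem stmt_6 (D : ℕ) (hD0 : 0 < D) (hDns : ¬ IsSquare D)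
    (hDmod : D % 4 = 0 ∨ D % 4 = 1)
    (K : Type) [Field K] [CharZero K]
    (sqrtD : K) (hsq : sqrtD ^ 2 = (D : K))
    (hgen : ∀ x : K, ∃ a b : ℚ, x = (a : K) + (b : K) * sqrtD)
    (σ : K →+* K) (hσ : σ sqrtD = -sqrtD)
    (OD : Submodule ℤ K)
    (hOD : ∀ x : K, x ∈ OD ↔ ∃ m l : ℤ, x = (m : K) + (l : K) * (((D : K) + sqrtD) / 2))
    (n a b : ℤ) (hn : 0 < n) (hb : 0 < b)
    (ω : K) (hω : ω = (a : K) + (b : K) * (((D : K) + sqrtD) / 2))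
    (𝔄 : Submodule ℤ K) (h𝔄 : 𝔄 = Submodule.span ℤ {(n : K), ω}) :
    -- (1) ideal criterion
    (IsIdealOfOrd OD 𝔄 ↔ b ∣ a ∧ b ∣ n ∧ ∃ m : ℤ, ω * σ ω = ((n * b * m : ℤ) : K)) ∧
    -- (2) the norm is n·b
    (IsIdealOfOrd OD 𝔄 → idealNorm OD 𝔄 = (n * b).toNat) ∧
    -- (3) primitivity criterion
    (IsIdealOfOrd OD 𝔄 →
      ((∀ m : ℤ, (∀ x ∈ 𝔄, ∃ y ∈ OD, x = (m : K) * y) → m = 1 ∨ m = -1) ↔ b = 1)) ∧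
    -- (4a) invertibility of a primitive ideal, and its inverse
    (b = 1 → IsIdealOfOrd OD 𝔄 →
      ∀ Nn t : ℤ, ω * σ ω = ((n * Nn : ℤ) : K) → ω + σ ω = ((t : ℤ) : K) →
        (((∃ J : Submodule ℤ K, 𝔄 * J = OD) ↔ Int.gcd n (Int.gcd Nn t : ℤ) = 1) ∧
          ((∃ J : Submodule ℤ K, 𝔄 * J = OD) →
            𝔄 * Submodule.span ℤ ((fun x => ((n : K))⁻¹ * σ x) '' (𝔄 : Set K)) = OD))) ∧
    -- (4b) invertibility of a general ideal, and its inverse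
    (∀ α β : K, ∀ 𝔅 : Submodule ℤ K, 𝔅 = Submodule.span ℤ {α, β} → IsIdealOfOrd OD 𝔅 →
      𝔅 ≠ ⊥ →
      ∀ Na Nb t : ℤ, α * σ α = (Na : K) → β * σ β = (Nb : K) →
        σ α * β + α * σ β = (t : K) →
        ((∃ J : Submodule ℤ K, 𝔅 * J = OD) ↔
            Int.gcd Na (Int.gcd Nb t : ℤ) = idealNorm OD 𝔅) ∧
        ((∃ J : Submodule ℤ K, 𝔅 * J = OD) →
          𝔅 * Submodule.span ℤ
              ((fun x => ((idealNorm OD 𝔅 : ℕ) : K)⁻¹ * σ x) '' (𝔅 : Set K)) = OD)) :=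
  stmt_6_general D hDns hDmod K sqrtD hsq σ hσ OD hOD n a b hn hb ω hω 𝔄 h𝔄
end

section
/- Let I₁, I₂ be fractional ideals of K and let E be a symplectic form on the rank-4 ℤ-module I₁ ⊕ I₂ such that the diagonal multiplication action of O_D is self-adjoint with respect to E. Then the ℚ-bilinear extension of E to K² vanishes identically on (K⊕{0})×(K⊕{0}) and on ({0}⊕K)×({0}⊕K); in particular (I₁⊕{0}, {0}⊕I₂) is a decomposition of (I₁⊕I₂, E) into Lagrangian subgroups. -/
/-- `A` is a fractional ideal of `K` with respect to the order `O`: a finitely generated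
`O`-stable ℤ-submodule of `K` of full rank. -/
def IsFracIdealOf {K : Type} [Field K] [CharZero K] (O A : Submodule ℤ K) : Prop :=
  A.FG ∧ Submodule.span ℚ (A : Set K) = ⊤ ∧ ∀ x ∈ O, ∀ y ∈ A, x * y ∈ A

/-!
Self-adjointness of the diagonal action extends by ℚ-linearity from the lattice `I₁ ⊕ I₂`
to `K × K`, and from the order `O_D` to its ℚ-span, which is all of `K`. Then for every
vector `m` and `z ∈ K`, alternation and self-adjointness give
`E m (z m) = E (z m) m = -E m (z m)`, so `E (x m) (y m) = E m (x y m) = 0`; take `m = (1, 0)`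
and `m = (0, 1)`. The lattice part is bookkeeping: `I₁ ⊕ 0` and `0 ⊕ I₂` have rank
`[K : ℚ] = 2`, and the quotients of `I₁ ⊕ I₂` by them embed into `K`.
-/

section QuadraticField

variable {K : Type*} [Field K] [CharZero K]

theorem span_rat_one_sqrt_eq_top {s : K} (hgen : ∀ x : K, ∃ a b : ℚ, x = a + b * s) :
    Submodule.span ℚ {1, s} = ⊤ := by
  refine eq_top_iff.2 fun x _ ↦ ?_
  obtain ⟨a, b, rfl⟩ := hgen x
  rw [Submodule.mem_span_pair]
  exact ⟨a, b, by simp [Rat.smul_def]⟩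

theorem finrank_rat_eq_two_of_sq_eq {d : ℕ} (hd : ¬IsSquare d) {s : K} (hs : s ^ 2 = d)
    (hgen : ∀ x : K, ∃ a b : ℚ, x = a + b * s) : Module.finrank ℚ K = 2 := by
  have hli : LinearIndependent ℚ ![1, s] := by
    refine (LinearIndependent.pair_iff' one_ne_zero).2 fun q hq ↦ hd ?_
    rw [← Rat.isSquare_natCast_iff]
    refine ⟨q, Rat.cast_injective (α := K) ?_⟩
    simp [← hs, ← hq, sq]
  have := finrank_span_eq_card hli
  rwa [Matrix.range_cons, Matrix.range_cons, Matrix.range_empty, Set.union_empty,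
    Set.singleton_union, span_rat_one_sqrt_eq_top hgen, finrank_top, Fintype.card_fin] at this

theorem span_rat_eq_top_of_one_mem_of_mem {O : Submodule ℤ K} {d : ℕ} {s : K}
    (hgen : ∀ x : K, ∃ a b : ℚ, x = a + b * s) (h1 : 1 ∈ O)
    (hω : ((d : K) + s) / 2 ∈ O) : Submodule.span ℚ (O : Set K) = ⊤ := by
  rw [eq_top_iff, ← span_rat_one_sqrt_eq_top hgen, Submodule.span_le, Set.insert_subset_iff,
    Set.singleton_subset_iff]
  have hs : s = (2 : ℚ) • (((d : K) + s) / 2) - (d : ℚ) • 1 := by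
    simp only [Rat.smul_def]
    push_cast
    ring
  refine ⟨Submodule.subset_span h1, ?_⟩
  rw [SetLike.mem_coe, hs]
  exact sub_mem (Submodule.smul_mem _ _ (Submodule.subset_span hω))
    (Submodule.smul_mem _ _ (Submodule.subset_span h1))

end QuadraticField

namespace LinearMap

variable {R M : Type*} [CommRing R] [AddCommGroup M] [Module R M]

theorem isAdjointPair_of_span_eq_top {N : Type*} [AddCommGroup N] [Module R N]
    {S : Set M} (hS : Submodule.span R S = ⊤) {B : M →ₗ[R] M →ₗ[R] N} {f g : M →ₗ[R] M}
    (h : ∀ v ∈ S, ∀ w ∈ S, B (f v) w = B v (g w)) : B.IsAdjointPair B f g := by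
  intro v w
  induction (hS ▸ Submodule.mem_top : v ∈ Submodule.span R S),
    (hS ▸ Submodule.mem_top : w ∈ Submodule.span R S) using Submodule.span_induction₂ with
  | mem_mem v w hv hw => exact h v hv w hw
  | _ => simp_all

theorem isAdjointPair_smul_of_span_eq_top {N A : Type*} [AddCommGroup N] [Module R N]
    [CommRing A] [Algebra R A] [Module A M] [IsScalarTower R A M]
    {T : Set A} (hT : Submodule.span R T = ⊤) {B : M →ₗ[R] M →ₗ[R] N}
    (h : ∀ x ∈ T, B.IsAdjointPair B (x • ·) (x • ·)) (x : A) :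
    B.IsAdjointPair B (x • ·) (x • ·) := by
  intro v w
  induction (hT ▸ Submodule.mem_top : x ∈ Submodule.span R T) using Submodule.span_induction with
  | mem x hx => exact h x hx v w
  | zero => simp
  | add x y _ _ hx hy => simp [add_smul, hx, hy]
  | smul r x _ hx => simp [smul_assoc, hx]

theorem IsAlt.apply_smul_smul_eq_zero [NoZeroDivisors R] [CharZero R] {A : Type*}
    [CommRing A] [Algebra R A] [Module A M] [IsScalarTower R A M] {B : M →ₗ[R] M →ₗ[R] R}
    (hB : B.IsAlt) (hadj : ∀ x : A, B.IsAdjointPair B (x • ·) (x • ·)) (m : M) (x y : A) :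
    B (x • m) (y • m) = 0 := by
  have hm : ∀ z : A, B m (z • m) = 0 := fun z ↦ by
    rw [← CharZero.eq_neg_self_iff]
    calc B m (z • m) = B (z • m) m := (hadj z m m).symm
      _ = -B m (z • m) := (hB.neg _ _).symm
  calc B (x • m) (y • m) = B m ((x * y) • m) :=
        (hadj x m (y • m)).trans (by rw [← smul_smul])
    _ = 0 := hm _

end LinearMap

theorem IsFracIdealOf.isLattice {K : Type} [Field K] [CharZero K] {O A : Submodule ℤ K}
    (h : IsFracIdealOf O A) : Submodule.IsLattice ℚ A :=
  ⟨h.1, h.2.1⟩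

theorem Submodule.IsLattice.nonempty_basis {R K V : Type*} [CommRing R] [IsDomain R]
    [IsPrincipalIdealRing R] [Field K] [Algebra R K] [IsFractionRing R K]
    [AddCommGroup V] [Module R V] [Module K V] [IsScalarTower R K V] [FiniteDimensional K V]
    (M : Submodule R V) [IsLattice K M] :
    Nonempty (Module.Basis (Fin (Module.finrank K V)) R M) :=
  ⟨Module.finBasisOfFinrankEq R M <| Module.finrank_eq_of_rank_eq <|
    (IsLattice.rank' K M).trans (Module.finrank_eq_rank K V).symm⟩

namespace Submodule

variable {R M M₂ : Type*} [CommRing R] [AddCommGroup M] [Module R M] [AddCommGroup M₂]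
  [Module R M₂]

theorem nonempty_basis_prod_bot {ι : Type*} {p : Submodule R M} (b : Module.Basis ι R p) :
    Nonempty (Module.Basis ι R (p.prod (⊥ : Submodule R M₂))) :=
  ⟨b.map (p.equivMapOfInjective _ LinearMap.inl_injective ≪≫ₗ LinearEquiv.ofEq _ _ p.map_inl)⟩

theorem nonempty_basis_bot_prod {ι : Type*} {q : Submodule R M₂} (b : Module.Basis ι R q) :
    Nonempty (Module.Basis ι R ((⊥ : Submodule R M).prod q)) :=
  ⟨b.map (q.equivMapOfInjective _ LinearMap.inr_injective ≪≫ₗ LinearEquiv.ofEq _ _ q.map_inr)⟩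

theorem comap_subtype_prod_bot (p : Submodule R M) (q : Submodule R M₂) :
    comap (p.prod q).subtype (p.prod ⊥) =
      LinearMap.ker (LinearMap.snd R M M₂ ∘ₗ (p.prod q).subtype) := by
  ext ⟨v, hv⟩
  simpa using fun _ ↦ (mem_prod.1 hv).1

theorem comap_subtype_bot_prod (p : Submodule R M) (q : Submodule R M₂) :
    comap (p.prod q).subtype ((⊥ : Submodule R M).prod q) =
      LinearMap.ker (LinearMap.fst R M M₂ ∘ₗ (p.prod q).subtype) := by
  ext ⟨v, hv⟩
  simpa using fun _ ↦ (mem_prod.1 hv).2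

end Submodule

theorem LinearMap.noZeroSMulDivisors_quotient_ker {R M N : Type*} [CommRing R] [AddCommGroup M]
    [Module R M] [AddCommGroup N] [Module R N] [NoZeroSMulDivisors R N] (f : M →ₗ[R] N) :
    NoZeroSMulDivisors R (M ⧸ ker f) :=
  Function.Injective.noZeroSMulDivisors _
    (ker_eq_bot.1 ((ker f).ker_liftQ_eq_bot f le_rfl le_rfl)) (map_zero _) (map_smul _)

theorem stmt_9_general (D : ℕ) (hDns : ¬ IsSquare D)
    (K : Type) [Field K] [CharZero K]
    (sqrtD : K) (hsq : sqrtD ^ 2 = (D : K))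
    (hgen : ∀ x : K, ∃ a b : ℚ, x = (a : K) + (b : K) * sqrtD)
    (OD : Submodule ℤ K)
    (hOD : ∀ x : K, x ∈ OD ↔ ∃ m l : ℤ, x = (m : K) + (l : K) * (((D : K) + sqrtD) / 2))
    (I₁ I₂ : Submodule ℤ K) (hI₁ : IsFracIdealOf OD I₁) (hI₂ : IsFracIdealOf OD I₂)
    (E : (K × K) →ₗ[ℚ] (K × K) →ₗ[ℚ] ℚ)
    (halt : ∀ v : K × K, E v v = 0)
    (hsa : ∀ x ∈ OD, ∀ v ∈ I₁.prod I₂, ∀ w ∈ I₁.prod I₂,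
      E (x * Prod.fst v, x * Prod.snd v) w = E v (x * Prod.fst w, x * Prod.snd w)) :
    (∀ x y : K, E (x, 0) (y, 0) = 0) ∧
    (∀ x y : K, E (0, x) (0, y) = 0) ∧
    (I₁.prod (⊥ : Submodule ℤ K)) ⊔ ((⊥ : Submodule ℤ K).prod I₂) = I₁.prod I₂ ∧
    (I₁.prod (⊥ : Submodule ℤ K)) ⊓ ((⊥ : Submodule ℤ K).prod I₂) = ⊥ ∧
    Nonempty (Module.Basis (Fin 2) ℤ ↥(I₁.prod (⊥ : Submodule ℤ K))) ∧
    Nonempty (Module.Basis (Fin 2) ℤ ↥((⊥ : Submodule ℤ K).prod I₂)) ∧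
    NoZeroSMulDivisors ℤ
      (↥(I₁.prod I₂) ⧸ Submodule.comap (I₁.prod I₂).subtype
        (I₁.prod (⊥ : Submodule ℤ K))) ∧
    NoZeroSMulDivisors ℤ
      (↥(I₁.prod I₂) ⧸ Submodule.comap (I₁.prod I₂).subtype
        ((⊥ : Submodule ℤ K).prod I₂)) := by
  have hrank := finrank_rat_eq_two_of_sq_eq hDns hsq hgen
  have : FiniteDimensional ℚ K := Module.finite_of_finrank_eq_succ hrank
  have := hI₁.isLattice
  have := hI₂.isLattice
  have hOD_span : Submodule.span ℚ (OD : Set K) = ⊤ :=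
    span_rat_eq_top_of_one_mem_of_mem hgen ((hOD 1).2 ⟨1, 0, by simp⟩)
      ((hOD (((D : K) + sqrtD) / 2)).2 ⟨0, 1, by simp⟩)
  have hlattice_span :
      Submodule.span ℚ ((I₁.prod I₂ : Submodule ℤ (K × K)) : Set (K × K)) = ⊤ := by
    rw [Submodule.prod_coe, Submodule.span_prod_eq ℚ I₁.zero_mem I₂.zero_mem,
      Submodule.IsLattice.span_eq_top, Submodule.IsLattice.span_eq_top, Submodule.prod_top]
  have hadj : ∀ x : K, E.IsAdjointPair E (x • ·) (x • ·) :=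
    E.isAdjointPair_smul_of_span_eq_top hOD_span fun x hx ↦
      E.isAdjointPair_of_span_eq_top hlattice_span (f := DistribSMul.toLinearMap ℚ _ x)
        (g := DistribSMul.toLinearMap ℚ _ x) fun v hv w hw ↦ hsa x hx v hv w hw
  have hvanish := LinearMap.IsAlt.apply_smul_smul_eq_zero halt hadj
  obtain ⟨b₁⟩ := Submodule.IsLattice.nonempty_basis (K := ℚ) I₁
  obtain ⟨b₂⟩ := Submodule.IsLattice.nonempty_basis (K := ℚ) I₂
  refine ⟨fun x y ↦ by simpa using hvanish (1, 0) x y,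
    fun x y ↦ by simpa using hvanish (0, 1) x y,
    by simp [Submodule.prod_sup_prod], by simp [Submodule.prod_inf_prod],
    Submodule.nonempty_basis_prod_bot (b₁.reindex (finCongr hrank)),
    Submodule.nonempty_basis_bot_prod (b₂.reindex (finCongr hrank)), ?_, ?_⟩
  · rw [Submodule.comap_subtype_prod_bot]
    exact LinearMap.noZeroSMulDivisors_quotient_ker _
  · rw [Submodule.comap_subtype_bot_prod]
    exact LinearMap.noZeroSMulDivisors_quotient_ker _

/-- a symplectic form on `I₁ ⊕ I₂` for which the diagonal `O_D`-action is
self-adjoint vanishes (after ℚ-bilinear extension to `K²`) on `K⊕0` and on `0⊕K`; in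
particular `(I₁⊕0, 0⊕I₂)` is a decomposition into Lagrangian subgroups. -/
theorem stmt_9 (D : ℕ) (hD0 : 0 < D) (hDns : ¬ IsSquare D)
    (hDmod : D % 4 = 0 ∨ D % 4 = 1)
    (K : Type) [Field K] [CharZero K]
    (sqrtD : K) (hsq : sqrtD ^ 2 = (D : K))
    (hgen : ∀ x : K, ∃ a b : ℚ, x = (a : K) + (b : K) * sqrtD)
    (σ : K →+* K) (hσ : σ sqrtD = -sqrtD)
    (OD : Submodule ℤ K)
    (hOD : ∀ x : K, x ∈ OD ↔ ∃ m l : ℤ, x = (m : K) + (l : K) * (((D : K) + sqrtD) / 2))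
    (I₁ I₂ : Submodule ℤ K) (hI₁ : IsFracIdealOf OD I₁) (hI₂ : IsFracIdealOf OD I₂)
    (E : (K × K) →ₗ[ℚ] (K × K) →ₗ[ℚ] ℚ)
    (halt : ∀ v : K × K, E v v = 0)
    (hint : ∀ v ∈ I₁.prod I₂, ∀ w ∈ I₁.prod I₂, ∃ m : ℤ, E v w = (m : ℚ))
    (hnd : ∀ v ∈ I₁.prod I₂, (∀ w ∈ I₁.prod I₂, E v w = 0) → v = 0)
    (hsa : ∀ x ∈ OD, ∀ v ∈ I₁.prod I₂, ∀ w ∈ I₁.prod I₂,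
      E (x * Prod.fst v, x * Prod.snd v) w = E v (x * Prod.fst w, x * Prod.snd w)) :
    (∀ x y : K, E (x, 0) (y, 0) = 0) ∧
    (∀ x y : K, E (0, x) (0, y) = 0) ∧
    (I₁.prod (⊥ : Submodule ℤ K)) ⊔ ((⊥ : Submodule ℤ K).prod I₂) = I₁.prod I₂ ∧
    (I₁.prod (⊥ : Submodule ℤ K)) ⊓ ((⊥ : Submodule ℤ K).prod I₂) = ⊥ ∧
    Nonempty (Module.Basis (Fin 2) ℤ ↥(I₁.prod (⊥ : Submodule ℤ K))) ∧
    Nonempty (Module.Basis (Fin 2) ℤ ↥((⊥ : Submodule ℤ K).prod I₂)) ∧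
    NoZeroSMulDivisors ℤ
      (↥(I₁.prod I₂) ⧸ Submodule.comap (I₁.prod I₂).subtype
        (I₁.prod (⊥ : Submodule ℤ K))) ∧
    NoZeroSMulDivisors ℤ
      (↥(I₁.prod I₂) ⧸ Submodule.comap (I₁.prod I₂).subtype
        ((⊥ : Submodule ℤ K).prod I₂)) :=
  stmt_9_general D hDns K sqrtD hsq hgen OD hOD I₁ I₂ hI₁ hI₂ E halt hsa
end

section
/- Let I₁, I₂ be fractional ideals of K and let E be a symplectic form on I₁ ⊕ I₂ such that the diagonal multiplication action of O_D is self-adjoint with respect to E. Then there exists a fractional ideal I of K with I₁ ⊆ I such that the ℚ-bilinear extension of E to K² restricts to a symplectic form of type (1,1) on I ⊕ I₂; likewise there exists a fractional ideal I with I₂ ⊆ I such that E is symplectic of type (1,1) on I₁ ⊕ I. -/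
/-- The (ℚ-bilinearly extended) form `E` restricted to the lattice `Λ` is symplectic of
type `(d 0, …, d (k-1))`. -/
def SympQTypeOn {V : Type} [AddCommGroup V] [Module ℚ V]
    (E : V →ₗ[ℚ] V →ₗ[ℚ] ℚ) (Λ : Submodule ℤ V) (k : ℕ) (d : Fin k → ℕ) : Prop :=
  ∃ b : Module.Basis (Fin k ⊕ Fin k) ℤ ↥Λ,
    (∀ i j, E (b (Sum.inl i) : V) (b (Sum.inl j) : V) = 0) ∧
    (∀ i j, E (b (Sum.inr i) : V) (b (Sum.inr j) : V) = 0) ∧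
    (∀ i j, E (b (Sum.inl i) : V) (b (Sum.inr j) : V) = if i = j then (d i : ℚ) else 0) ∧
    (∀ i, 0 < d i) ∧ ∀ i j : Fin k, i ≤ j → d i ∣ d j

/-!
Self-adjointness of the `O_D`-action extends ℚ-linearly from `O_D` and the lattices to all of `K`;
together with alternation it forces `E ((x₁, x₂), (y₁, y₂)) = T (x₁ y₂ - x₂ y₁)` for one ℚ-linear
functional `T ≠ 0` on `K`. The ideal `I` is the dual lattice of `I₂` (resp. `I₁`) for the
nondegenerate pairing `(x, y) ↦ T (x y)`: it contains `I₁` (resp. `I₂`) because `E` is integral on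
`I₁ ⊕ I₂`, it is `O_D`-stable because the pairing is, and a ℤ-basis of the lattice together with
its dual basis is a symplectic basis of type `(1, 1)`.
-/

open Module Submodule Set

theorem finrank_eq_two_of_sq_eq_natCast {K : Type} [Field K] [CharZero K] {D : ℕ}
    (hD : ¬IsSquare D) {s : K} (hs : s ^ 2 = D) (hgen : ∀ x : K, ∃ a b : ℚ, x = a + b * s) :
    finrank ℚ K = 2 := by
  have hli : LinearIndependent ℚ ![(1 : K), s] := by
    refine (LinearIndependent.pair_iff' one_ne_zero).2 fun q hq => hD ?_
    rw [Rat.smul_def, mul_one] at hq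
    refine Rat.isSquare_natCast_iff.1 ⟨q, (Rat.cast_injective (α := K)) ?_⟩
    push_cast
    rw [hq, ← hs, sq]
  have hsp : ⊤ ≤ span ℚ (range ![(1 : K), s]) := by
    rintro x -
    obtain ⟨a, b, rfl⟩ := hgen x
    rw [← mul_one (a : K), ← Rat.smul_def, ← Rat.smul_def]
    exact add_mem (smul_mem _ _ (subset_span ⟨0, rfl⟩)) (smul_mem _ _ (subset_span ⟨1, rfl⟩))
  simpa using finrank_eq_card_basis (Basis.mk hli hsp)

theorem span_rat_eq_top_of_mem_iff {K : Type} [Field K] [CharZero K] {D : ℕ} {s : K}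
    (hgen : ∀ x : K, ∃ a b : ℚ, x = a + b * s) (O : Submodule ℤ K)
    (hO : ∀ x : K, x ∈ O ↔ ∃ m l : ℤ, x = m + l * ((D + s) / 2)) :
    span ℚ (O : Set K) = ⊤ := by
  refine eq_top_iff.2 fun x _ => ?_
  obtain ⟨a, b, rfl⟩ := hgen x
  have h1 : (1 : K) ∈ O := (hO 1).2 ⟨1, 0, by simp⟩
  have hγ : ((D : K) + s) / 2 ∈ O := (hO _).2 ⟨0, 1, by simp⟩
  have hx : (a : K) + b * s = (a - b * D) • (1 : K) + (2 * b) • (((D : K) + s) / 2) := by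
    rw [Rat.smul_def, Rat.smul_def]; push_cast; ring
  rw [hx]
  exact add_mem (smul_mem _ _ (subset_span h1)) (smul_mem _ _ (subset_span hγ))

theorem LinearMap.apply_eq_apply_one_mul {R A M : Type*} [CommRing R] [CommRing A] [Algebra R A]
    [AddCommGroup M] [Module R M] (e : A →ₗ[R] A →ₗ[R] M) {S L L' : Set A}
    (hS : span R S = ⊤) (hL : span R L = ⊤) (hL' : span R L' = ⊤)
    (h : ∀ a ∈ S, ∀ x ∈ L, ∀ y ∈ L', e (a * x) y = e x (a * y)) (x y : A) :
    e x y = e 1 (x * y) := by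
  have hA : ∀ a ∈ S, ∀ x y, e (a * x) y = e x (a * y) := fun a ha => by
    have : e.compl₁₂ (mulLeft R a) id = e.compl₁₂ id (mulLeft R a) :=
      ext_on hL fun x hx => ext_on hL' fun y hy => h a ha x hx y hy
    exact fun x y => congr($this x y)
  have : (e.flip y).comp (mulRight R 1) = (e 1).comp (mulRight R y) :=
    ext_on hS fun a ha => hA a ha 1 y
  simpa using congr($this x)

theorem LinearMap.eq_zero_of_isAlt_of_apply_eq_apply_one_mul {R A M : Type*} [CommRing R]
    [CommRing A] [Algebra R A] [AddCommGroup M] [IsAddTorsionFree M] [Module R M]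
    {e : A →ₗ[R] A →ₗ[R] M} (he : e.IsAlt) (hmul : ∀ x y, e x y = e 1 (x * y)) (x y : A) :
    e x y = 0 := by
  refine self_eq_neg.1 ?_
  rw [he.neg, hmul, hmul y, mul_comm]

theorem exists_functional_of_isAlt_of_selfAdjoint {K : Type} [Field K] [CharZero K]
    {E : (K × K) →ₗ[ℚ] (K × K) →ₗ[ℚ] ℚ} (halt : E.IsAlt) {O L₁ L₂ : Submodule ℤ K}
    (hO : span ℚ (O : Set K) = ⊤) (hL₁ : span ℚ (L₁ : Set K) = ⊤)
    (hL₂ : span ℚ (L₂ : Set K) = ⊤)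
    (hsa : ∀ a ∈ O, ∀ v ∈ L₁.prod L₂, ∀ w ∈ L₁.prod L₂,
      E (a * v.1, a * v.2) w = E v (a * w.1, a * w.2)) :
    ∃ T : K →ₗ[ℚ] ℚ, ∀ v w, E v w = T (v.1 * w.2 - v.2 * w.1) := by
  have h₁₁ : ∀ x y : K, E (x, 0) (y, 0) = 0 := by
    have := (E.compl₁₂ (.inl ℚ K K) (.inl ℚ K K)).apply_eq_apply_one_mul hO hL₁ hL₁
      fun a ha x hx y hy => by simpa using hsa a ha (x, 0) ⟨hx, zero_mem _⟩ (y, 0) ⟨hy, zero_mem _⟩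
    have he : (E.compl₁₂ (.inl ℚ K K) (.inl ℚ K K)).IsAlt := fun x => halt _
    simpa using LinearMap.eq_zero_of_isAlt_of_apply_eq_apply_one_mul he this
  have h₂₂ : ∀ x y : K, E (0, x) (0, y) = 0 := by
    have := (E.compl₁₂ (.inr ℚ K K) (.inr ℚ K K)).apply_eq_apply_one_mul hO hL₂ hL₂
      fun a ha x hx y hy => by simpa using hsa a ha (0, x) ⟨zero_mem _, hx⟩ (0, y) ⟨zero_mem _, hy⟩
    have he : (E.compl₁₂ (.inr ℚ K K) (.inr ℚ K K)).IsAlt := fun x => halt _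
    simpa using LinearMap.eq_zero_of_isAlt_of_apply_eq_apply_one_mul he this
  have h₁₂ : ∀ x y : K, E (x, 0) (0, y) = E (1, 0) (0, x * y) := by
    simpa using (E.compl₁₂ (.inl ℚ K K) (.inr ℚ K K)).apply_eq_apply_one_mul hO hL₁ hL₂
      fun a ha x hx y hy => by simpa using hsa a ha (x, 0) ⟨hx, zero_mem _⟩ (0, y) ⟨zero_mem _, hy⟩
  refine ⟨(E (1, 0)).comp (.inr ℚ K K), fun ⟨x₁, x₂⟩ ⟨y₁, y₂⟩ => ?_⟩
  conv_lhs => rw [← Prod.fst_add_snd (x₁, x₂), ← Prod.fst_add_snd (y₁, y₂)]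
  rw [map_sub]
  simp only [LinearMap.comp_apply, LinearMap.inr_apply, map_add, LinearMap.add_apply, h₁₁, h₂₂]
  rw [← halt.neg (y₁, 0) (0, x₂), h₁₂ y₁, h₁₂ x₁, mul_comm y₁]
  ring

theorem LinearMap.nondegenerate_mul_compr₂ {F K : Type*} [Field F] [Field K] [Algebra F K]
    {T : K →ₗ[F] F} (hT : T ≠ 0) : ((LinearMap.mul F K).compr₂ T).Nondegenerate := by
  obtain ⟨z, hz⟩ : ∃ z, T z ≠ 0 := by by_contra! h; exact hT (LinearMap.ext h)
  refine ⟨fun x hx => ?_, fun y hy => ?_⟩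
  · by_contra hx0
    exact hz (by simpa [mul_inv_cancel_left₀ hx0] using hx (x⁻¹ * z))
  · by_contra hy0
    exact hz (by simpa [inv_mul_cancel_right₀ hy0] using hy (z * y⁻¹))

theorem Submodule.IsLattice.exists_basis_span_eq {R K V : Type*} [CommRing R] [IsDomain R]
    [IsPrincipalIdealRing R] [Field K] [Algebra R K] [IsFractionRing R K] [AddCommGroup V]
    [Module K V] [Module R V] [IsScalarTower R K V] (L : Submodule R V) [L.IsLattice K] {n : ℕ}
    (hn : finrank K V = n) : ∃ c : Basis (Fin n) K V, span R (range c) = L := by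
  have hL : finrank R L = n := by
    rw [← hn, finrank, finrank, IsLattice.rank' K L]
  let b := finBasisOfFinrankEq R L hL
  refine ⟨b.extendOfIsLattice K, ?_⟩
  have : range (b.extendOfIsLattice K) = L.subtype '' range b := by
    rw [← range_comp]; ext; simp
  rw [this, ← map_span, b.span_eq, map_top, range_subtype]

theorem exists_basis_dual_of_isFracIdealOf {K : Type} [Field K] [CharZero K] {n : ℕ}
    (hn : finrank ℚ K = n) {T : K →ₗ[ℚ] ℚ} (hT : T ≠ 0) {O L : Submodule ℤ K}
    (hL : IsFracIdealOf O L) :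
    ∃ c d : Basis (Fin n) ℚ K, span ℤ (range c) = L ∧ IsFracIdealOf O (span ℤ (range d)) ∧
      (∀ x, (∀ y ∈ L, ∃ m : ℤ, T (x * y) = m) → x ∈ span ℤ (range d)) ∧
      ∀ i j, T (d i * c j) = if i = j then 1 else 0 := by
  have : L.IsLattice ℚ := ⟨hL.1, hL.2.1⟩
  obtain ⟨c, hc⟩ := IsLattice.exists_basis_span_eq L hn
  set B : LinearMap.BilinForm ℚ K := (LinearMap.mul ℚ K).compr₂ T
  have hB := LinearMap.nondegenerate_mul_compr₂ hT
  have hdual : B.dualSubmodule L = span ℤ (range (B.dualBasis hB c)) := by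
    rw [← hc, B.dualSubmodule_span_of_basis hB]
  refine ⟨c, B.dualBasis hB c, hc, ⟨fg_span (finite_range _), ?_, ?_⟩, ?_, ?_⟩
  · rw [span_span_of_tower, Basis.span_eq]
  · rw [← hdual]
    intro a ha x hx y hy
    simpa [B, mul_assoc, mul_left_comm a] using hx (a * y) (hL.2.2 a ha y hy)
  · intro x hx
    rw [← hdual]
    intro y hy
    obtain ⟨m, hm⟩ := hx y hy
    exact mem_one.2 ⟨m, by simp [B, hm]⟩
  · intro i j
    simpa [B, eq_comm] using B.apply_dualBasis_left hB c i j

theorem Module.Basis.span_range_prod {R S V W ι ι' : Type*} [Semiring R] [Semiring S]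
    [AddCommMonoid V] [AddCommMonoid W] [Module R V] [Module R W] [Module S V] [Module S W]
    (u : Basis ι S V) (v : Basis ι' S W) :
    span R (range (u.prod v)) = (span R (range u)).prod (span R (range v)) := by
  rw [← LinearMap.span_inl_union_inr, ← range_comp, ← range_comp, ← Sum.elim_range]
  congr 2
  ext i <;> cases i <;> simp [Basis.prod_apply]

theorem sympQTypeOn_span_basis {V : Type} [AddCommGroup V] [Module ℚ V]
    (E : V →ₗ[ℚ] V →ₗ[ℚ] ℚ) {k : ℕ} {d : Fin k → ℕ} (b : Basis (Fin k ⊕ Fin k) ℚ V)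
    (hll : ∀ i j, E (b (.inl i)) (b (.inl j)) = 0) (hrr : ∀ i j, E (b (.inr i)) (b (.inr j)) = 0)
    (hlr : ∀ i j, E (b (.inl i)) (b (.inr j)) = if i = j then (d i : ℚ) else 0)
    (hd : ∀ i, 0 < d i) (hdvd : ∀ i j, i ≤ j → d i ∣ d j) :
    SympQTypeOn E (span ℤ (range b)) k d := by
  refine ⟨Basis.span (b.linearIndependent.restrict_scalars' ℤ), ?_⟩
  simp only [Basis.span_apply]
  exact ⟨hll, hrr, hlr, hd, hdvd⟩

theorem stmt_10_general (D : ℕ) (hDns : ¬ IsSquare D)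
    (K : Type) [Field K] [CharZero K]
    (sqrtD : K) (hsq : sqrtD ^ 2 = (D : K))
    (hgen : ∀ x : K, ∃ a b : ℚ, x = (a : K) + (b : K) * sqrtD)
    (OD : Submodule ℤ K)
    (hOD : ∀ x : K, x ∈ OD ↔ ∃ m l : ℤ, x = (m : K) + (l : K) * (((D : K) + sqrtD) / 2))
    (I₁ I₂ : Submodule ℤ K) (hI₁ : IsFracIdealOf OD I₁) (hI₂ : IsFracIdealOf OD I₂)
    (E : (K × K) →ₗ[ℚ] (K × K) →ₗ[ℚ] ℚ)
    (halt : ∀ v : K × K, E v v = 0)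
    (hint : ∀ v ∈ I₁.prod I₂, ∀ w ∈ I₁.prod I₂, ∃ m : ℤ, E v w = (m : ℚ))
    (hnd : ∀ v ∈ I₁.prod I₂, (∀ w ∈ I₁.prod I₂, E v w = 0) → v = 0)
    (hsa : ∀ x ∈ OD, ∀ v ∈ I₁.prod I₂, ∀ w ∈ I₁.prod I₂,
      E (x * Prod.fst v, x * Prod.snd v) w = E v (x * Prod.fst w, x * Prod.snd w)) :
    (∃ I : Submodule ℤ K, IsFracIdealOf OD I ∧ I₁ ≤ I ∧
      SympQTypeOn E (I.prod I₂) 2 ![1, 1]) ∧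
    (∃ I : Submodule ℤ K, IsFracIdealOf OD I ∧ I₂ ≤ I ∧
      SympQTypeOn E (I₁.prod I) 2 ![1, 1]) := by
  have hdim := finrank_eq_two_of_sq_eq_natCast hDns hsq hgen
  obtain ⟨T, hE⟩ := exists_functional_of_isAlt_of_selfAdjoint halt
    (span_rat_eq_top_of_mem_iff hgen OD hOD) hI₁.2.1 hI₂.2.1 hsa
  have hT : T ≠ 0 := by
    rintro rfl
    obtain ⟨x, hx, hx0⟩ := I₁.ne_bot_iff.1 fun h => by simpa [h] using hI₁.2.1
    exact hx0 congr(($(hnd (x, 0) ⟨hx, zero_mem _⟩ fun w _ => by simp [hE])).1)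
  have hone : (![1, 1] : Fin 2 → ℕ) = fun _ => 1 := by ext i; fin_cases i <;> rfl
  constructor
  · obtain ⟨c, d, hc, hd, hdmem, hdc⟩ := exists_basis_dual_of_isFracIdealOf hdim hT hI₂
    refine ⟨_, hd, fun x hx => hdmem x fun y hy => ?_, ?_⟩
    · simpa [hE] using hint (x, 0) ⟨hx, zero_mem _⟩ (0, y) ⟨zero_mem _, hy⟩
    · rw [← hc, ← Basis.span_range_prod, hone]
      exact sympQTypeOn_span_basis E _ (by simp [hE]) (by simp [hE]) (by simp [hE, hdc])
        (fun _ => one_pos) fun _ _ _ => dvd_rfl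
  · obtain ⟨c, d, hc, hd, hdmem, hdc⟩ := exists_basis_dual_of_isFracIdealOf hdim hT hI₁
    refine ⟨_, hd, fun x hx => hdmem x fun y hy => ?_, ?_⟩
    · simpa [hE, mul_comm] using hint (y, 0) ⟨hy, zero_mem _⟩ (0, x) ⟨zero_mem _, hx⟩
    · rw [← hc, ← Basis.span_range_prod, hone]
      exact sympQTypeOn_span_basis E _ (by simp [hE]) (by simp [hE])
        (fun i j => by simpa [hE, mul_comm, eq_comm] using hdc j i) (fun _ => one_pos)
        fun _ _ _ => dvd_rfl

/-- for a symplectic form `E` on `I₁ ⊕ I₂` with self-adjoint `O_D`-action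
there are fractional ideals `I ⊇ I₁` (resp. `I ⊇ I₂`) such that `E` is symplectic of type
`(1,1)` on `I ⊕ I₂` (resp. on `I₁ ⊕ I`). -/
theorem stmt_10 (D : ℕ) (hD0 : 0 < D) (hDns : ¬ IsSquare D)
    (hDmod : D % 4 = 0 ∨ D % 4 = 1)
    (K : Type) [Field K] [CharZero K]
    (sqrtD : K) (hsq : sqrtD ^ 2 = (D : K))
    (hgen : ∀ x : K, ∃ a b : ℚ, x = (a : K) + (b : K) * sqrtD)
    (σ : K →+* K) (hσ : σ sqrtD = -sqrtD)
    (OD : Submodule ℤ K)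
    (hOD : ∀ x : K, x ∈ OD ↔ ∃ m l : ℤ, x = (m : K) + (l : K) * (((D : K) + sqrtD) / 2))
    (I₁ I₂ : Submodule ℤ K) (hI₁ : IsFracIdealOf OD I₁) (hI₂ : IsFracIdealOf OD I₂)
    (E : (K × K) →ₗ[ℚ] (K × K) →ₗ[ℚ] ℚ)
    (halt : ∀ v : K × K, E v v = 0)
    (hint : ∀ v ∈ I₁.prod I₂, ∀ w ∈ I₁.prod I₂, ∃ m : ℤ, E v w = (m : ℚ))
    (hnd : ∀ v ∈ I₁.prod I₂, (∀ w ∈ I₁.prod I₂, E v w = 0) → v = 0)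
    (hsa : ∀ x ∈ OD, ∀ v ∈ I₁.prod I₂, ∀ w ∈ I₁.prod I₂,
      E (x * Prod.fst v, x * Prod.snd v) w = E v (x * Prod.fst w, x * Prod.snd w)) :
    (∃ I : Submodule ℤ K, IsFracIdealOf OD I ∧ I₁ ≤ I ∧
      SympQTypeOn E (I.prod I₂) 2 ![1, 1]) ∧
    (∃ I : Submodule ℤ K, IsFracIdealOf OD I ∧ I₂ ≤ I ∧
      SympQTypeOn E (I₁.prod I) 2 ![1, 1]) :=
  stmt_10_general D hDns K sqrtD hsq hgen OD hOD I₁ I₂ hI₁ hI₂ E halt hint hnd hsa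
end

section
/- Let 𝔞 be a nonzero ideal of O_D, let I be a fractional ideal of K, and let E be a symplectic form of type (1,1) on 𝔞 ⊕ I such that the diagonal multiplication action of O_D is self-adjoint with respect to E. Then there exists an isomorphism of symplectic O_D-modules θ : (𝔞 ⊕ I, E) → (𝔞 ⊕ 𝔞^∨, ⟨·,·⟩) with θ((λ,0)) = (λ,0) for all λ ∈ 𝔞 and θ({0} ⊕ I) = {0} ⊕ 𝔞^∨, where ⟨·,·⟩ is the trace pairing. -/
/-- The trace pairing `⟨(x,y),(x̃,ỹ)⟩ = tr(x̃y − xỹ)` on `K²`. -/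
def traceFormK {K : Type} [Field K] (σ : K →+* K) (v w : K × K) : K :=
  (w.1 * v.2 - v.1 * w.2) + σ (w.1 * v.2 - v.1 * w.2)

/-- The inverse different `A^∨ = {x ∈ K : tr(xA) ⊆ ℤ}` of a lattice `A ⊆ K`. -/
def dualLat {K : Type} [Field K] (σ : K →+* K) (A : Submodule ℤ K) : Submodule ℤ K where
  carrier := {x | ∀ y ∈ A, ∃ m : ℤ, x * y + σ (x * y) = (m : K)}
  add_mem' := by
    intro a b ha hb y hy
    obtain ⟨m, hm⟩ := ha y hy
    obtain ⟨l, hl⟩ := hb y hy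
    refine ⟨m + l, ?_⟩
    have h1 : (a + b) * y + σ ((a + b) * y) = (a * y + σ (a * y)) + (b * y + σ (b * y)) := by
      rw [add_mul, map_add]; ring
    rw [h1, hm, hl]; push_cast; ring
  zero_mem' := by
    intro y hy
    exact ⟨0, by simp⟩
  smul_mem' := by
    intro c x hx y hy
    obtain ⟨m, hm⟩ := hx y hy
    refine ⟨c * m, ?_⟩
    have h1 : (c • x) * y = c • (x * y) := smul_mul_assoc c x y
    rw [h1, map_zsmul, ← smul_add, hm, zsmul_eq_mul]
    push_cast; ring

/-!
Self-adjointness extends ℚ-linearly from `O_D` to all of `K`, and together with alternation it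
forces `E((x₁,x₂),(y₁,y₂)) = tr(β(x₁y₂ - x₂y₁))` for some `β ∈ K`, since every ℚ-linear
functional on `K` is `z ↦ tr(βz)`. Then `θ(x, y) = (x, -βy)` carries `E` to the trace pairing.
A lattice on which a form has type `(1,1)` is its own dual, so `(0, y) ∈ 𝔞 ⊕ I` iff `(0, y)`
pairs integrally with `𝔞 ⊕ I`, i.e. iff `-βy ∈ 𝔞^∨`; hence `θ` maps `0 ⊕ I` onto `0 ⊕ 𝔞^∨`.
-/

namespace SympQTypeOn

variable {V : Type} [AddCommGroup V] [Module ℚ V] {E : V →ₗ[ℚ] V →ₗ[ℚ] ℚ} {Λ : Submodule ℤ V}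
  {k : ℕ} {d : Fin k → ℕ}

theorem exists_int_eq (hE : E.IsAlt) (h : SympQTypeOn E Λ k d) {v w : V} (hv : v ∈ Λ)
    (hw : w ∈ Λ) : ∃ m : ℤ, E v w = m := by
  obtain ⟨b, hll, hrr, hlr, -, -⟩ := h
  have hbasis : ∀ i j, ∃ m : ℤ, E (b i : V) (b j) = m := by
    rintro (i | i) (j | j)
    · exact ⟨0, by simp [hll]⟩
    · exact ⟨if i = j then d i else 0, by simp [hlr]⟩
    · exact ⟨if j = i then -d j else 0, by rw [← hE.neg, hlr]; split_ifs <;> simp⟩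
    · exact ⟨0, by simp [hrr]⟩
  have hΛ : Submodule.span ℤ (Set.range fun i => (b i : V)) = Λ :=
    (Submodule.span_range_subtype_eq_top_iff Λ fun i => (b i).2).mp b.span_eq
  let B := E.restrictScalars₁₂ ℤ ℤ
  have hB : B v w ∈ Submodule.map₂ B Λ Λ := Submodule.apply_mem_map₂ B hv hw
  rw [← hΛ, Submodule.map₂_span_span] at hB
  suffices Submodule.span ℤ (Set.image2 (fun v w => B v w) (Set.range fun i => (b i : V))
      (Set.range fun i => (b i : V))) ≤ 1 by
    obtain ⟨m, hm⟩ := Submodule.mem_one.mp (this hB)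
    exact ⟨m, by simpa [B] using hm.symm⟩
  rw [Submodule.span_le]
  rintro - ⟨-, ⟨i, rfl⟩, -, ⟨j, rfl⟩, rfl⟩
  obtain ⟨m, hm⟩ := hbasis i j
  exact Submodule.mem_one.mpr ⟨m, by simp [B, hm]⟩

theorem mem_iff_forall_exists_int_eq (hE : E.IsAlt) (h : SympQTypeOn E Λ k d)
    (hd : ∀ i, d i = 1) (hspan : Submodule.span ℚ (Λ : Set V) = ⊤) {u : V} :
    u ∈ Λ ↔ ∀ w ∈ Λ, ∃ m : ℤ, E u w = m := by
  refine ⟨fun hu w hw => exists_int_eq hE h hu hw, fun hu => ?_⟩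
  obtain ⟨b, hll, hrr, hlr, -, -⟩ := h
  have hrl : ∀ i j, E (b (Sum.inr i) : V) (b (Sum.inl j)) = if j = i then -1 else 0 := by
    intro i j
    rw [← hE.neg, hlr, hd]
    split_ifs <;> simp
  have hΛ : Submodule.span ℤ (Set.range fun i => (b i : V)) = Λ :=
    (Submodule.span_range_subtype_eq_top_iff Λ fun i => (b i).2).mp b.span_eq
  have hu' : u ∈ Submodule.span ℚ (Set.range fun i => (b i : V)) := by
    have hle := Submodule.span_le_restrictScalars ℤ ℚ (Set.range fun i => (b i : V))
    rw [hΛ] at hle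
    exact (Submodule.span_le (R := ℚ)).mpr hle (hspan ▸ Submodule.mem_top)
  obtain ⟨c, rfl⟩ := (Submodule.mem_span_range_iff_exists_fun ℚ).mp hu'
  -- Pairing with the symplectic basis reads off the coefficients of `u`, up to sign.
  have hint : ∀ i, ∃ n : ℤ, c i = n := by
    rintro (j | j)
    · obtain ⟨m, hm⟩ := hu _ (b (Sum.inr j)).2
      refine ⟨m, ?_⟩
      simpa [map_sum, Fintype.sum_sum_type, hlr, hrr, hd] using hm
    · obtain ⟨m, hm⟩ := hu _ (b (Sum.inl j)).2
      refine ⟨-m, ?_⟩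
      simp [map_sum, Fintype.sum_sum_type, hll, hrl] at hm
      push_cast
      linarith
  choose n hn using hint
  refine Λ.sum_mem fun i _ => ?_
  rw [hn i, Int.cast_smul_eq_zsmul]
  exact zsmul_mem (b i).2 _

end SympQTypeOn

section SMulLeftEqSMulRight

variable {R A V : Type*} [CommRing R] [CommRing A] [Algebra R A] [AddCommGroup V] [Module R V]
  [Module A V] [IsScalarTower R A V] (E : V →ₗ[R] V →ₗ[R] R)

theorem smul_left_eq_smul_right_of_span_eq_top {s : Set V} (hs : Submodule.span R s = ⊤) {x : A}
    (h : ∀ v ∈ s, ∀ w ∈ s, E (x • v) w = E v (x • w)) (v w : V) :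
    E (x • v) w = E v (x • w) := by
  let μ := DistribSMul.toLinearMap R V x
  have hμ : E ∘ₗ μ = E.compl₂ μ :=
    LinearMap.ext_on hs fun v hv => LinearMap.ext_on hs fun w hw => h v hv w hw
  exact LinearMap.congr_fun₂ hμ v w

theorem smul_left_eq_smul_right_of_span_scalars_eq_top {S : Set A} (hS : Submodule.span R S = ⊤)
    (h : ∀ x ∈ S, ∀ v w : V, E (x • v) w = E v (x • w)) (x : A) (v w : V) :
    E (x • v) w = E v (x • w) := by
  have hx : x ∈ Submodule.span R S := hS ▸ Submodule.mem_top
  induction hx using Submodule.span_induction generalizing v w with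
  | mem x hx => exact h x hx v w
  | zero => simp
  | add x y _ _ hx hy => simp [add_smul, hx, hy]
  | smul r x _ hx => simp [smul_assoc, hx]

end SMulLeftEqSMulRight

theorem LinearMap.IsAlt.apply_eq_of_smul_left_eq_smul_right {A : Type*} [CommRing A] [Algebra ℚ A]
    (E : A × A →ₗ[ℚ] A × A →ₗ[ℚ] ℚ) (hE : E.IsAlt)
    (hsa : ∀ (x : A) (v w : A × A), E (x • v) w = E v (x • w)) (v w : A × A) :
    E v w = E (1, 0) (0, v.1 * w.2) - E (1, 0) (0, v.2 * w.1) := by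
  have hdiag : ∀ (u : A × A) (x y : A), E (x • u) (y • u) = 0 := by
    intro u x y
    have h := hE.neg u ((x * y) • u)
    rw [hsa] at h
    rw [hsa, smul_smul]
    linarith
  have h12 : ∀ x y : A, E (x • (1, 0)) (y • (0, 1)) = E (1, 0) (0, x * y) := by
    intro x y
    rw [hsa, smul_smul]
    simp
  have h21 : ∀ x y : A, E (x • (0, 1)) (y • (1, 0)) = -E (1, 0) (0, y * x) := by
    intro x y
    rw [← h12, hE.neg]
  have hsplit : ∀ u : A × A, u = u.1 • (1, 0) + u.2 • (0, 1) := fun u => by ext <;> simp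
  conv_lhs => rw [hsplit v, hsplit w]
  simp only [map_add, LinearMap.add_apply, hdiag, h12, h21, mul_comm w.1]
  ring

theorem Submodule.eq_top_of_one_mem_of_mem {K : Type*} [Field K] [CharZero K] {s : K}
    (hgen : ∀ x : K, ∃ a b : ℚ, x = a + b * s) {S : Submodule ℚ K} (h1 : 1 ∈ S) (hs : s ∈ S) :
    S = ⊤ := by
  refine eq_top_iff'.mpr fun x => ?_
  obtain ⟨a, b, rfl⟩ := hgen x
  have hx : (a : K) + b * s = a • (1 : K) + b • s := by simp [Rat.smul_def]
  rw [hx]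
  exact add_mem (S.smul_mem a h1) (S.smul_mem b hs)

theorem Submodule.span_eq_top_of_mul_mem {R K : Type*} [CommRing R] [Field K] [Algebra R K]
    {O A : Set K} (hO : Submodule.span R O = ⊤) {a : K} (ha0 : a ≠ 0)
    (hA : ∀ x ∈ O, x * a ∈ A) : Submodule.span R A = ⊤ := by
  have hle : (Submodule.span R O).map (LinearMap.mulRight R a) ≤ Submodule.span R A := by
    rw [Submodule.map_span, Submodule.span_le]
    rintro - ⟨x, hx, rfl⟩
    exact Submodule.subset_span (hA x hx)
  refine eq_top_iff'.mpr fun z => hle ⟨z / a, hO ▸ Submodule.mem_top, ?_⟩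
  simp [ha0]

theorem LinearMap.exists_apply_eq_trace_mul {K : Type*} [Field K] [CharZero K] {s : K} {r : ℚ}
    (hr : r ≠ 0) (hs : s ^ 2 = r) (hgen : ∀ x : K, ∃ a b : ℚ, x = a + b * s) {σ : K →+* K} (hσ : σ s = -s)
    (L : K →ₗ[ℚ] ℚ) : ∃ β : K, ∀ z : K, (L z : K) = β * z + σ (β * z) := by
  -- `β` is pinned down by `tr β = L 1` and `tr (β s) = L s`.
  refine ⟨(L 1 / 2 : ℚ) + (L s / (2 * r) : ℚ) * s, fun z => ?_⟩
  obtain ⟨a, b, rfl⟩ := hgen z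
  have hL : L (a + b * s) = a * L 1 + b * L s := by
    have hz : (a : K) + b * s = a • (1 : K) + b • s := by simp [Rat.smul_def]
    rw [hz, map_add, map_smul, map_smul, smul_eq_mul, smul_eq_mul]
  simp only [hL, map_add, map_mul, map_ratCast, hσ]
  push_cast
  field_simp
  linear_combination (-2 * (b : K) * L s) * hs

theorem span_rat_order_eq_top {K : Type*} [Field K] [CharZero K] {D : ℕ} {s : K}
    (hgen : ∀ x : K, ∃ a b : ℚ, x = a + b * s) {O : Submodule ℤ K}
    (hO : ∀ x : K, x ∈ O ↔ ∃ m l : ℤ, x = m + l * ((D + s) / 2)) :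
    Submodule.span ℚ (O : Set K) = ⊤ := by
  have h1 : (1 : K) ∈ O := (hO 1).2 ⟨1, 0, by simp⟩
  have hγ : ((D : K) + s) / 2 ∈ O := (hO _).2 ⟨0, 1, by simp⟩
  have hs : s = (2 : ℚ) • (((D : K) + s) / 2) - (D : ℚ) • 1 := by
    simp [Rat.smul_def]
    ring
  refine Submodule.eq_top_of_one_mem_of_mem hgen (Submodule.subset_span h1) ?_
  rw [hs]
  exact sub_mem (Submodule.smul_mem _ _ (Submodule.subset_span hγ))
    (Submodule.smul_mem _ _ (Submodule.subset_span h1))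

theorem exists_apply_eq_trace_mul_det {K : Type*} [Field K] [CharZero K] {s : K} {r : ℚ}
    (hr : r ≠ 0) (hs : s ^ 2 = r) (hgen : ∀ x : K, ∃ a b : ℚ, x = a + b * s) {σ : K →+* K}
    (hσ : σ s = -s) {E : K × K →ₗ[ℚ] K × K →ₗ[ℚ] ℚ} (hE : E.IsAlt)
    (hsa : ∀ (x : K) (v w : K × K), E (x • v) w = E v (x • w)) :
    ∃ β : K, ∀ v w : K × K,
      (E v w : K) = β * (v.1 * w.2 - v.2 * w.1) + σ (β * (v.1 * w.2 - v.2 * w.1)) := by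
  obtain ⟨β, hβ⟩ :=
    LinearMap.exists_apply_eq_trace_mul hr hs hgen hσ (E (1, 0) ∘ₗ LinearMap.inr ℚ K K)
  simp only [LinearMap.comp_apply, LinearMap.inr_apply] at hβ
  refine ⟨β, fun v w => ?_⟩
  rw [hE.apply_eq_of_smul_left_eq_smul_right E hsa, Rat.cast_sub, hβ, hβ, mul_sub, map_sub]
  ring

theorem mem_iff_neg_mul_mem_dualLat {K : Type} [Field K] [CharZero K] (σ : K →+* K)
    {A I : Submodule ℤ K} {E : K × K →ₗ[ℚ] K × K →ₗ[ℚ] ℚ} {β : K}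
    (hE : ∀ v w : K × K,
      (E v w : K) = β * (v.1 * w.2 - v.2 * w.1) + σ (β * (v.1 * w.2 - v.2 * w.1)))
    (hmem : ∀ u, u ∈ A.prod I ↔ ∀ w ∈ A.prod I, ∃ m : ℤ, E u w = m) (y : K) :
    y ∈ I ↔ -β * y ∈ dualLat σ A := by
  have hpair : ∀ (w : K × K) (m : ℤ),
      E (0, y) w = m ↔ -β * y * w.1 + σ (-β * y * w.1) = m := by
    intro w m
    rw [← (Rat.cast_injective (α := K)).eq_iff, hE]
    push_cast
    ring_nf
  have hy : y ∈ I ↔ ((0 : K), y) ∈ A.prod I := by simp [Submodule.mem_prod, A.zero_mem]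
  rw [hy, hmem]
  simp only [hpair]
  constructor
  · intro h a ha
    exact h (a, 0) (Submodule.mem_prod.mpr ⟨ha, I.zero_mem⟩)
  · intro h w hw
    exact h w.1 (Submodule.mem_prod.mp hw).1

theorem bijOn_prodMap_mul_left {K : Type*} [Field K] {c : K} (hc : c ≠ 0) {A I J : Set K}
    (hIJ : ∀ y, y ∈ I ↔ c * y ∈ J) : Set.BijOn (Prod.map id (c * ·)) (A ×ˢ I) (A ×ˢ J) := by
  refine ⟨fun v hv => ⟨hv.1, (hIJ _).mp hv.2⟩, ?_, fun w hw => ⟨(w.1, c⁻¹ * w.2), ?_, ?_⟩⟩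
  · intro v _ w _ h
    simp only [Prod.map, id, Prod.mk.injEq, mul_right_inj' hc] at h
    exact Prod.ext h.1 h.2
  · exact ⟨hw.1, (hIJ _).mpr (by simpa [hc] using hw.2)⟩
  · simp [hc]

theorem stmt_11_general (D : ℕ) (hD0 : 0 < D)
    (K : Type) [Field K] [CharZero K]
    (sqrtD : K) (hsq : sqrtD ^ 2 = (D : K))
    (hgen : ∀ x : K, ∃ a b : ℚ, x = (a : K) + (b : K) * sqrtD)
    (σ : K →+* K) (hσ : σ sqrtD = -sqrtD)
    (OD : Submodule ℤ K)
    (hOD : ∀ x : K, x ∈ OD ↔ ∃ m l : ℤ, x = (m : K) + (l : K) * (((D : K) + sqrtD) / 2))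
    (𝔄 : Submodule ℤ K) (hid : IsIdealOfOrd OD 𝔄) (hne : 𝔄 ≠ ⊥)
    (I : Submodule ℤ K) (hI : IsFracIdealOf OD I)
    (E : (K × K) →ₗ[ℚ] (K × K) →ₗ[ℚ] ℚ)
    (halt : ∀ v : K × K, E v v = 0)
    (htype : SympQTypeOn E (𝔄.prod I) 2 ![1, 1])
    (hsa : ∀ x ∈ OD, ∀ v ∈ 𝔄.prod I, ∀ w ∈ 𝔄.prod I,
      E (x * Prod.fst v, x * Prod.snd v) w = E v (x * Prod.fst w, x * Prod.snd w)) :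
    ∃ θ : (K × K) →ₗ[ℚ] (K × K),
      Set.BijOn θ (𝔄.prod I : Set (K × K)) ((𝔄.prod (dualLat σ 𝔄)) : Set (K × K)) ∧
      (∀ x ∈ OD, ∀ v : K × K, θ (x * v.1, x * v.2) = (x * (θ v).1, x * (θ v).2)) ∧
      (∀ v ∈ 𝔄.prod I, ∀ w ∈ 𝔄.prod I,
        traceFormK σ (θ v) (θ w) = ((E v w : ℚ) : K)) ∧
      (∀ x ∈ 𝔄, θ (x, 0) = (x, 0)) ∧
      θ '' {p : K × K | p.1 = 0 ∧ p.2 ∈ I}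
        = {p : K × K | p.1 = 0 ∧ p.2 ∈ dualLat σ 𝔄} := by
  have hOD_span := span_rat_order_eq_top hgen hOD
  obtain ⟨a, ha, ha0⟩ := Submodule.exists_mem_ne_zero_of_ne_bot hne
  have hΛ_span : Submodule.span ℚ ((𝔄.prod I : Submodule ℤ (K × K)) : Set (K × K)) = ⊤ := by
    rw [Submodule.prod_coe, Submodule.span_prod_eq ℚ 𝔄.zero_mem I.zero_mem,
      Submodule.span_eq_top_of_mul_mem hOD_span ha0 fun x hx => hid.2 x hx a ha, hI.2.1,
      Submodule.prod_top]
  have hsaK : ∀ (x : K) (v w : K × K), E (x • v) w = E v (x • w) :=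
    smul_left_eq_smul_right_of_span_scalars_eq_top E hOD_span fun x hx =>
      smul_left_eq_smul_right_of_span_eq_top E hΛ_span (hsa x hx)
  obtain ⟨β, hE⟩ := exists_apply_eq_trace_mul_det (Nat.cast_ne_zero.mpr hD0.ne')
    (by simpa using hsq) hgen hσ halt hsaK
  have hβ0 : β ≠ 0 := by
    rintro rfl
    obtain ⟨b, -, -, hlr, -, -⟩ := htype
    simpa [hlr] using hE (b (Sum.inl 0)) (b (Sum.inr 0))
  have hIJ : ∀ y, y ∈ I ↔ -β * y ∈ dualLat σ 𝔄 :=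
    mem_iff_neg_mul_mem_dualLat σ hE fun _ =>
      htype.mem_iff_forall_exists_int_eq halt (by decide) hΛ_span
  have hbij (A : Set K) := bijOn_prodMap_mul_left (A := A) (neg_ne_zero.mpr hβ0) hIJ
  refine ⟨LinearMap.prodMap LinearMap.id (LinearMap.mulLeft ℚ (-β)), hbij 𝔄,
    fun x _ v => ?_, fun v _ w _ => ?_, fun x _ => by simp, (hbij {0}).image_eq⟩
  · simp only [LinearMap.prodMap_apply, LinearMap.id_apply, LinearMap.mulLeft_apply]
    ring_nf
  · simp only [traceFormK, LinearMap.prodMap_apply, LinearMap.id_apply, LinearMap.mulLeft_apply, hE]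
    ring_nf

/-- a type `(1,1)` symplectic form on `𝔞 ⊕ I` with self-adjoint `O_D`-action
is isomorphic, as a symplectic `O_D`-module, to `(𝔞 ⊕ 𝔞^∨, ⟨·,·⟩)` by an isomorphism fixing
`𝔞 ⊕ 0` pointwise and carrying `0 ⊕ I` onto `0 ⊕ 𝔞^∨`. -/
theorem stmt_11 (D : ℕ) (hD0 : 0 < D) (hDns : ¬ IsSquare D)
    (hDmod : D % 4 = 0 ∨ D % 4 = 1)
    (K : Type) [Field K] [CharZero K]
    (sqrtD : K) (hsq : sqrtD ^ 2 = (D : K))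
    (hgen : ∀ x : K, ∃ a b : ℚ, x = (a : K) + (b : K) * sqrtD)
    (σ : K →+* K) (hσ : σ sqrtD = -sqrtD)
    (OD : Submodule ℤ K)
    (hOD : ∀ x : K, x ∈ OD ↔ ∃ m l : ℤ, x = (m : K) + (l : K) * (((D : K) + sqrtD) / 2))
    (𝔄 : Submodule ℤ K) (hid : IsIdealOfOrd OD 𝔄) (hne : 𝔄 ≠ ⊥)
    (I : Submodule ℤ K) (hI : IsFracIdealOf OD I)
    (E : (K × K) →ₗ[ℚ] (K × K) →ₗ[ℚ] ℚ)
    (halt : ∀ v : K × K, E v v = 0)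
    (htype : SympQTypeOn E (𝔄.prod I) 2 ![1, 1])
    (hsa : ∀ x ∈ OD, ∀ v ∈ 𝔄.prod I, ∀ w ∈ 𝔄.prod I,
      E (x * Prod.fst v, x * Prod.snd v) w = E v (x * Prod.fst w, x * Prod.snd w)) :
    ∃ θ : (K × K) →ₗ[ℚ] (K × K),
      Set.BijOn θ (𝔄.prod I : Set (K × K)) ((𝔄.prod (dualLat σ 𝔄)) : Set (K × K)) ∧
      (∀ x ∈ OD, ∀ v : K × K, θ (x * v.1, x * v.2) = (x * (θ v).1, x * (θ v).2)) ∧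
      (∀ v ∈ 𝔄.prod I, ∀ w ∈ 𝔄.prod I,
        traceFormK σ (θ v) (θ w) = ((E v w : ℚ) : K)) ∧
      (∀ x ∈ 𝔄, θ (x, 0) = (x, 0)) ∧
      θ '' {p : K × K | p.1 = 0 ∧ p.2 ∈ I}
        = {p : K × K | p.1 = 0 ∧ p.2 ∈ dualLat σ 𝔄} :=
  stmt_11_general D hD0 K sqrtD hsq hgen σ hσ OD hOD 𝔄 hid hne I hI E halt htype hsa
end
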